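/- arXiv:2507.20501 — 6 statements merged into one kernel-verified Lean document; each statement's English description precedes it below -/
import Mathlib

section
/- Let a > 0, θ > 0, and let R_θ(x) = a²/(2x) − a²θ/(4x²) be the linear-demand pricing surrogate reward. Then for every δ with 0 < δ < θ, R_θ(θ + δ) − R_θ(θ − δ) = a²·δ³/(θ² − δ²)². In particular R_θ(θ − δ) < R_θ(θ + δ): underestimating the price-sensitivity parameter by δ yields a strictly larger revenue loss than overestimating it by δ. -/
/-!
Over the common denominator `4(θ² − δ²)²` the difference `R_θ(θ + δ) − R_θ(θ − δ)` collapses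
to `4a²δ³`, which is positive as soon as `a ≠ 0` and `δ > 0`.
-/

noncomputable def surrogateReward (a θ x : ℝ) : ℝ :=
  a ^ 2 / (2 * x) - a ^ 2 * θ / (4 * x ^ 2)

theorem surrogateReward_add_sub_surrogateReward_sub {a θ δ : ℝ}
    (h_add : θ + δ ≠ 0) (h_sub : θ - δ ≠ 0) :
    surrogateReward a θ (θ + δ) - surrogateReward a θ (θ - δ) =
      a ^ 2 * δ ^ 3 / (θ ^ 2 - δ ^ 2) ^ 2 := by
  have h_sq : θ ^ 2 - δ ^ 2 ≠ 0 := by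
    rw [sq_sub_sq]
    exact mul_ne_zero h_add h_sub
  unfold surrogateReward
  field_simp
  ring

theorem surrogateReward_sub_lt_add {a θ δ : ℝ} (ha : a ≠ 0) (hδ : 0 < δ)
    (h_add : θ + δ ≠ 0) (h_sub : θ - δ ≠ 0) :
    surrogateReward a θ (θ - δ) < surrogateReward a θ (θ + δ) := by
  have h_sq : θ ^ 2 - δ ^ 2 ≠ 0 := by
    rw [sq_sub_sq]
    exact mul_ne_zero h_add h_sub
  have h_gap : 0 < a ^ 2 * δ ^ 3 / (θ ^ 2 - δ ^ 2) ^ 2 := by positivity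
  rw [← surrogateReward_add_sub_surrogateReward_sub h_add h_sub] at h_gap
  linarith

theorem stmt_8_general (a θ : ℝ) (ha : 0 < a)
    (R : ℝ → ℝ) (hR : ∀ x : ℝ, R x = a ^ 2 / (2 * x) - a ^ 2 * θ / (4 * x ^ 2)) :
    ∀ δ : ℝ, 0 < δ → δ < θ →
      R (θ + δ) - R (θ - δ) = a ^ 2 * δ ^ 3 / (θ ^ 2 - δ ^ 2) ^ 2 ∧
      R (θ - δ) < R (θ + δ) := by
  intro δ hδ hδθ
  obtain rfl : R = surrogateReward a θ := funext hR
  have h_add : θ + δ ≠ 0 := by linarith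
  have h_sub : θ - δ ≠ 0 := by linarith
  exact ⟨surrogateReward_add_sub_surrogateReward_sub h_add h_sub,
    surrogateReward_sub_lt_add ha.ne' hδ h_add h_sub⟩

/-- asymmetry of the linear-demand surrogate reward: for 0 < δ < θ,
`R_θ(θ+δ) − R_θ(θ−δ) = a²δ³/(θ²−δ²)²`, so underestimation is worse than overestimation. -/
theorem stmt_8 (a θ : ℝ) (ha : 0 < a) (hθ : 0 < θ)
    (R : ℝ → ℝ) (hR : ∀ x : ℝ, R x = a ^ 2 / (2 * x) - a ^ 2 * θ / (4 * x ^ 2)) :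
    ∀ δ : ℝ, 0 < δ → δ < θ →
      R (θ + δ) - R (θ - δ) = a ^ 2 * δ ^ 3 / (θ ^ 2 - δ ^ 2) ^ 2 ∧
      R (θ - δ) < R (θ + δ) :=
  stmt_8_general a θ ha R hR
end

section
/- (Oracle adjustment, single parameter.) Let θ ≠ 0 and let (θ̂_n) be a sequence of real-valued random variables on a probability space satisfying: (A1.1) lim_{n→∞} n·E[(θ̂_n − θ)²] = σ² for some constant σ² > 0; (A1.2) E[θ̂_n − θ] = o(n⁻¹); (A1.3) E[|θ̂_n − θ|^k] = O(n^{−k/2}) for every integer k ≥ 3. Let R_θ : ℝ → ℝ be five times differentiable and satisfy: (A2.1) R_θ'(θ) = 0 and R_θ''(θ) < 0; (A2.2) R_θ'''(θ)/R_θ''(θ) = C/θ for a constant C; (A2.3) there exists M > 0 with |R_θ^{(5)}(x)| ≤ M for all x ∈ ℝ. Define λ* = −(C + 2)·σ²/(2θ²). Then lim_{n→∞} n²·( E[R_θ(θ̂_n·(1 + λ*/n))] − E[R_θ(θ̂_n)] ) = −R_θ''(θ)·(C + 2)²·σ⁴/(8θ²), and this limit is nonnegative. -/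
/-!
Expand `R` to fourth order at `θ`: the bounded fifth derivative makes the remainder
`O(|x - θ|⁵)`, and by (A1.3) it contributes `o(n⁻²)` to both expected rewards. The adjusted
error is `θ̂ₙ(1 + λ/n) - θ = (1 + λ/n)(θ̂ₙ - θ) + λθ/n`, so its moments are binomial
combinations of those of `θ̂ₙ - θ`; at scale `n²` only the second and third moments change, by
`2λσ² + λ²θ²` and `3λθσ²`. Since `R'(θ) = 0`, the gain is
`R''(θ)(λσ² + λ²θ²/2) + R'''(θ)λθσ²/2`, a concave quadratic in `λ` which under (A2.2) is
maximised at `λ*`, with maximum `-R''(θ)(C + 2)²σ⁴/(8θ²)`.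
-/

open MeasureTheory Filter Asymptotics Real
open scoped Nat Topology

theorem abs_sub_taylor_le_of_abs_iteratedDeriv_le {f : ℝ → ℝ} {a M : ℝ} {n : ℕ}
    (hf : ∀ k < n + 2, Differentiable ℝ (iteratedDeriv k f))
    (hM : ∀ y, |iteratedDeriv (n + 2) f y| ≤ M) (x : ℝ) :
    |f x - ∑ k ∈ Finset.range (n + 2), iteratedDeriv k f a / k ! * (x - a) ^ k|
      ≤ M / (n + 1)! * |x - a| ^ (n + 2) := by
  rcases eq_or_ne a x with rfl | hax
  · simp [Finset.sum_range_succ']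
  have hcd : ContDiff ℝ (n + 1) f :=
    contDiff_of_differentiable_iteratedDeriv (n := n + 1) fun k hk =>
      hf k (by norm_cast at hk; omega)
  obtain ⟨y, hy, hlag⟩ := taylor_mean_remainder_lagrange_iteratedDeriv hax hcd.contDiffOn
  have htaylor : taylorWithinEval f n (Set.uIcc a x) a x
      = ∑ k ∈ Finset.range (n + 1), iteratedDeriv k f a / k ! * (x - a) ^ k := by
    rw [taylor_within_apply]
    refine Finset.sum_congr rfl fun k hk => ?_
    rw [iteratedDerivWithin_eq_iteratedDeriv (uniqueDiffOn_uIcc hax)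
      (hcd.contDiffAt.of_le (by exact_mod_cast (Finset.mem_range.1 hk).le)) Set.left_mem_uIcc,
      smul_eq_mul]
    ring
  have hlip : |iteratedDeriv (n + 1) f y - iteratedDeriv (n + 1) f a| ≤ M * |y - a| := by
    have := Convex.norm_image_sub_le_of_norm_deriv_le (s := Set.univ)
      (fun z _ => (hf (n + 1) (by omega) z)) (fun z _ => by
        rw [← iteratedDeriv_succ]; exact hM z) convex_univ (Set.mem_univ a) (Set.mem_univ y)
    simpa [Real.norm_eq_abs] using this
  have hya : |y - a| ≤ |x - a| := Set.abs_sub_left_of_mem_uIcc (Set.uIoo_subset_uIcc_self hy)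
  calc |f x - ∑ k ∈ Finset.range (n + 2), iteratedDeriv k f a / k ! * (x - a) ^ k|
      = |(iteratedDeriv (n + 1) f y - iteratedDeriv (n + 1) f a) * (x - a) ^ (n + 1)
          / (n + 1)!| := by
        rw [Finset.sum_range_succ, ← htaylor, sub_add_eq_sub_sub, hlag]
        ring_nf
    _ = |iteratedDeriv (n + 1) f y - iteratedDeriv (n + 1) f a| * |x - a| ^ (n + 1) / (n + 1)! := by
        rw [abs_div, abs_mul, abs_pow, Nat.abs_cast]
    _ ≤ M * |x - a| * |x - a| ^ (n + 1) / (n + 1)! := by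
        gcongr
        exact hlip.trans (mul_le_mul_of_nonneg_left hya ((abs_nonneg _).trans (hM a)))
    _ = M / (n + 1)! * |x - a| ^ (n + 2) := by ring

theorem affine_pow_eq_sum (c s x : ℝ) (k : ℕ) :
    (c * x + s) ^ k = ∑ j ∈ Finset.range (k + 1), c ^ j * s ^ (k - j) * k.choose j * x ^ j := by
  rw [add_pow]
  exact Finset.sum_congr rfl fun j _ => by ring

theorem tendsto_pow_mul_of_isBigO_rpow {g : ℕ → ℝ} {r : ℝ}
    (hg : g =O[atTop] fun n : ℕ => (n : ℝ) ^ r) {s : ℕ} (hs : s + r < 0) :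
    Tendsto (fun n : ℕ => (n : ℝ) ^ s * g n) atTop (𝓝 0) := by
  have hpow : (fun n : ℕ => (n : ℝ) ^ s * (n : ℝ) ^ r) =ᶠ[atTop]
      fun n : ℕ => (n : ℝ) ^ (s + r) := by
    filter_upwards [eventually_ne_atTop 0] with n hn
    rw [Real.rpow_add (by positivity), Real.rpow_natCast]
  have hlim : Tendsto (fun n : ℕ => (n : ℝ) ^ (s + r)) atTop (𝓝 0) := by
    simpa [Function.comp_def] using
      (tendsto_rpow_neg_atTop (neg_pos.2 hs)).comp tendsto_natCast_atTop_atTop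
  exact (((isBigO_refl _ _).mul hg).trans hpow.isBigO).trans_tendsto hlim

section Moments

variable {Ω : Type*} [MeasurableSpace Ω] {μ : Measure Ω}

theorem integrable_affine_pow {f : Ω → ℝ} {k : ℕ}
    (hf : ∀ j ≤ k, Integrable (fun ω => f ω ^ j) μ) (c s : ℝ) :
    Integrable (fun ω => (c * f ω + s) ^ k) μ := by
  simp_rw [affine_pow_eq_sum]
  exact integrable_finsetSum _ fun j hj =>
    (hf j (Nat.lt_succ_iff.1 (Finset.mem_range.1 hj))).const_mul _

theorem integral_affine_pow {f : Ω → ℝ} {k : ℕ}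
    (hf : ∀ j ≤ k, Integrable (fun ω => f ω ^ j) μ) (c s : ℝ) :
    ∫ ω, (c * f ω + s) ^ k ∂μ
      = ∑ j ∈ Finset.range (k + 1), c ^ j * s ^ (k - j) * k.choose j * ∫ ω, f ω ^ j ∂μ := by
  simp_rw [affine_pow_eq_sum]
  rw [integral_finsetSum _ fun j hj =>
    (hf j (Nat.lt_succ_iff.1 (Finset.mem_range.1 hj))).const_mul _]
  simp_rw [integral_const_mul]

theorem abs_integral_sub_taylor_le {f : ℝ → ℝ} {W : Ω → ℝ} {a M : ℝ} {n : ℕ}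
    (hf : ∀ k < n + 2, Differentiable ℝ (iteratedDeriv k f))
    (hM : ∀ y, |iteratedDeriv (n + 2) f y| ≤ M)
    (hfW : Integrable (fun ω => f (W ω)) μ)
    (hW : ∀ k ≤ n + 2, Integrable (fun ω => (W ω - a) ^ k) μ) :
    |∫ ω, f (W ω) ∂μ
        - ∑ k ∈ Finset.range (n + 2), iteratedDeriv k f a / k ! * ∫ ω, (W ω - a) ^ k ∂μ|
      ≤ M / (n + 1)! * ∫ ω, |W ω - a| ^ (n + 2) ∂μ := by
  have hP : ∀ k ∈ Finset.range (n + 2),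
      Integrable (fun ω => iteratedDeriv k f a / k ! * (W ω - a) ^ k) μ :=
    fun k hk => (hW k (Finset.mem_range.1 hk).le).const_mul _
  simp_rw [← integral_const_mul]
  rw [← integral_finsetSum _ hP, ← integral_sub hfW (integrable_finsetSum _ hP)]
  calc |∫ ω, (f (W ω) - ∑ k ∈ Finset.range (n + 2),
          iteratedDeriv k f a / k ! * (W ω - a) ^ k) ∂μ|
      ≤ ∫ ω, |f (W ω) - ∑ k ∈ Finset.range (n + 2),
          iteratedDeriv k f a / k ! * (W ω - a) ^ k| ∂μ := abs_integral_le_integral_abs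
    _ ≤ ∫ ω, M / (n + 1)! * |W ω - a| ^ (n + 2) ∂μ := by
        refine integral_mono_of_nonneg (Eventually.of_forall fun _ => abs_nonneg _)
          (((hW (n + 2) le_rfl).abs.congr ?_).const_mul _)
          (Eventually.of_forall fun ω => abs_sub_taylor_le_of_abs_iteratedDeriv_le hf hM (W ω))
        exact Eventually.of_forall fun ω => abs_pow _ _

theorem tendsto_mul_integral_sub_taylor {f : ℝ → ℝ} {W : ℕ → Ω → ℝ} {r : ℕ → ℝ} {a M : ℝ} {n : ℕ}
    (hf : ∀ k < n + 2, Differentiable ℝ (iteratedDeriv k f))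
    (hM : ∀ y, |iteratedDeriv (n + 2) f y| ≤ M)
    (hfW : ∀ m, Integrable (fun ω => f (W m ω)) μ)
    (hW : ∀ m, ∀ k ≤ n + 2, Integrable (fun ω => (W m ω - a) ^ k) μ)
    (hr : Tendsto (fun m => r m * ∫ ω, |W m ω - a| ^ (n + 2) ∂μ) atTop (𝓝 0)) :
    Tendsto (fun m => r m * (∫ ω, f (W m ω) ∂μ - ∑ k ∈ Finset.range (n + 2),
      iteratedDeriv k f a / k ! * ∫ ω, (W m ω - a) ^ k ∂μ)) atTop (𝓝 0) := by
  have hbound := hr.norm.const_mul (M / (n + 1)!)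
  rw [norm_zero, mul_zero] at hbound
  refine squeeze_zero_norm (fun m => ?_) hbound
  have hpos : 0 ≤ ∫ ω, |W m ω - a| ^ (n + 2) ∂μ := integral_nonneg fun _ => by positivity
  rw [norm_mul, norm_mul, Real.norm_of_nonneg hpos, Real.norm_eq_abs, mul_left_comm]
  exact mul_le_mul_of_nonneg_left (abs_integral_sub_taylor_le hf hM (hfW m) (hW m)) (abs_nonneg _)

theorem tendsto_natCast_mul_integral_pow {e : ℕ → Ω → ℝ} {k : ℕ} (hk : 3 ≤ k)
    (h : (fun n : ℕ => ∫ ω, |e n ω| ^ k ∂μ) =O[atTop] fun n : ℕ => (n : ℝ) ^ (-(k : ℝ) / 2)) :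
    Tendsto (fun n : ℕ => (n : ℝ) * ∫ ω, e n ω ^ k ∂μ) atTop (𝓝 0) := by
  have habs := tendsto_pow_mul_of_isBigO_rpow h (s := 1) (by
    have : (3 : ℝ) ≤ k := by exact_mod_cast hk
    linarith)
  refine squeeze_zero_norm (fun n => ?_) (by simpa using habs)
  rw [norm_mul, Real.norm_natCast, Real.norm_eq_abs]
  gcongr
  simpa only [abs_pow] using abs_integral_le_integral_abs (f := fun ω => e n ω ^ k) (μ := μ)

end Moments

section Adjustment

variable {Ω : Type*} [MeasurableSpace Ω] {μ : Measure Ω} [IsProbabilityMeasure μ]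
  {e : ℕ → Ω → ℝ} {σ2 : ℝ}

/- In the next three lemmas, for `n ≠ 0` the quantity `n² (E[(c e + b/n)ᵏ] - E[eᵏ])` with
`c = 1 + l/n` is a polynomial in `1/n` and the scaled moments `n E[eʲ]`, so its limit is
obtained by continuity. -/

theorem tendsto_sq_mul_integral_shift_sq (he : ∀ n k, Integrable (fun ω => e n ω ^ k) μ)
    (h1 : Tendsto (fun n : ℕ => (n : ℝ) * ∫ ω, e n ω ∂μ) atTop (𝓝 0))
    (h2 : Tendsto (fun n : ℕ => (n : ℝ) * ∫ ω, e n ω ^ 2 ∂μ) atTop (𝓝 σ2)) (l b : ℝ) :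
    Tendsto (fun n : ℕ => (n : ℝ) ^ 2 *
      (∫ ω, ((1 + l / n) * e n ω + b / n) ^ 2 ∂μ - ∫ ω, e n ω ^ 2 ∂μ))
      atTop (𝓝 (2 * l * σ2 + b ^ 2)) := by
  have hv := (tendsto_inv_atTop_nhds_zero_nat (𝕜 := ℝ)).prodMk_nhds (h1.prodMk_nhds h2)
  have hP : Continuous fun p : ℝ × ℝ × ℝ =>
      (2 * l + l ^ 2 * p.1) * p.2.2 + 2 * b * (1 + l * p.1) * p.2.1 + b ^ 2 := by
    fun_prop
  convert ((hP.tendsto _).comp hv).congr' ?_ using 2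
  · simp
  filter_upwards [eventually_ne_atTop 0] with n hn
  rw [Function.comp_apply, integral_affine_pow (fun j _ => he n j)]
  simp only [Finset.sum_range_succ, Finset.range_one, Finset.sum_singleton, Nat.choose, pow_zero,
    pow_one, tsub_zero, tsub_self, Nat.reduceAdd, Nat.add_one_sub_one, Nat.cast_one,
    Nat.cast_ofNat, one_mul, mul_one, add_zero, integral_const, probReal_univ, smul_eq_mul]
  field_simp
  ring

theorem tendsto_sq_mul_integral_shift_cube (he : ∀ n k, Integrable (fun ω => e n ω ^ k) μ)
    (h1 : Tendsto (fun n : ℕ => (n : ℝ) * ∫ ω, e n ω ∂μ) atTop (𝓝 0))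
    (h2 : Tendsto (fun n : ℕ => (n : ℝ) * ∫ ω, e n ω ^ 2 ∂μ) atTop (𝓝 σ2))
    (h3 : Tendsto (fun n : ℕ => (n : ℝ) * ∫ ω, e n ω ^ 3 ∂μ) atTop (𝓝 0)) (l b : ℝ) :
    Tendsto (fun n : ℕ => (n : ℝ) ^ 2 *
      (∫ ω, ((1 + l / n) * e n ω + b / n) ^ 3 ∂μ - ∫ ω, e n ω ^ 3 ∂μ))
      atTop (𝓝 (3 * b * σ2)) := by
  have hv := (tendsto_inv_atTop_nhds_zero_nat (𝕜 := ℝ)).prodMk_nhds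
    (h1.prodMk_nhds (h2.prodMk_nhds h3))
  have hP : Continuous fun p : ℝ × ℝ × ℝ × ℝ =>
      (3 * l + 3 * l ^ 2 * p.1 + l ^ 3 * p.1 ^ 2) * p.2.2.2 + 3 * b * (1 + l * p.1) ^ 2 * p.2.2.1
        + 3 * b ^ 2 * (1 + l * p.1) * p.1 * p.2.1 + b ^ 3 * p.1 := by
    fun_prop
  convert ((hP.tendsto _).comp hv).congr' ?_ using 2
  · simp
  filter_upwards [eventually_ne_atTop 0] with n hn
  rw [Function.comp_apply, integral_affine_pow (fun j _ => he n j)]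
  simp only [Finset.sum_range_succ, Finset.range_one, Finset.sum_singleton, Nat.choose, pow_zero,
    pow_one, tsub_zero, tsub_self, Nat.reduceAdd, Nat.reduceSub, Nat.add_one_sub_one, Nat.cast_one,
    Nat.cast_ofNat, one_mul, mul_one, add_zero, integral_const, probReal_univ, smul_eq_mul]
  field_simp
  ring

theorem tendsto_sq_mul_integral_shift_fourth (he : ∀ n k, Integrable (fun ω => e n ω ^ k) μ)
    (h1 : Tendsto (fun n : ℕ => (n : ℝ) * ∫ ω, e n ω ∂μ) atTop (𝓝 0))
    (h2 : Tendsto (fun n : ℕ => (n : ℝ) * ∫ ω, e n ω ^ 2 ∂μ) atTop (𝓝 σ2))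
    (h3 : Tendsto (fun n : ℕ => (n : ℝ) * ∫ ω, e n ω ^ 3 ∂μ) atTop (𝓝 0))
    (h4 : Tendsto (fun n : ℕ => (n : ℝ) * ∫ ω, e n ω ^ 4 ∂μ) atTop (𝓝 0)) (l b : ℝ) :
    Tendsto (fun n : ℕ => (n : ℝ) ^ 2 *
      (∫ ω, ((1 + l / n) * e n ω + b / n) ^ 4 ∂μ - ∫ ω, e n ω ^ 4 ∂μ))
      atTop (𝓝 0) := by
  have hv := (tendsto_inv_atTop_nhds_zero_nat (𝕜 := ℝ)).prodMk_nhds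
    (h1.prodMk_nhds (h2.prodMk_nhds (h3.prodMk_nhds h4)))
  have hP : Continuous fun p : ℝ × ℝ × ℝ × ℝ × ℝ =>
      (4 * l + 6 * l ^ 2 * p.1 + 4 * l ^ 3 * p.1 ^ 2 + l ^ 4 * p.1 ^ 3) * p.2.2.2.2
        + 4 * b * (1 + l * p.1) ^ 3 * p.2.2.2.1 + 6 * b ^ 2 * (1 + l * p.1) ^ 2 * p.1 * p.2.2.1
        + 4 * b ^ 3 * (1 + l * p.1) * p.1 ^ 2 * p.2.1 + b ^ 4 * p.1 ^ 2 := by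
    fun_prop
  convert ((hP.tendsto _).comp hv).congr' ?_ using 2
  · simp
  filter_upwards [eventually_ne_atTop 0] with n hn
  rw [Function.comp_apply, integral_affine_pow (fun j _ => he n j)]
  simp only [Finset.sum_range_succ, Finset.range_one, Finset.sum_singleton, Nat.choose, pow_zero,
    pow_one, tsub_zero, tsub_self, Nat.reduceAdd, Nat.reduceSub, Nat.add_one_sub_one, Nat.cast_one,
    Nat.cast_ofNat, one_mul, mul_one, add_zero, integral_const, probReal_univ, smul_eq_mul]
  field_simp
  ring

theorem tendsto_sq_mul_integral_abs_shift_pow_five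
    (he : ∀ n, Integrable (fun ω => |e n ω| ^ 5) μ)
    (h5 : Tendsto (fun n : ℕ => (n : ℝ) ^ 2 * ∫ ω, |e n ω| ^ 5 ∂μ) atTop (𝓝 0)) (l b : ℝ) :
    Tendsto (fun n : ℕ => (n : ℝ) ^ 2 * ∫ ω, |(1 + l / n) * e n ω + b / n| ^ 5 ∂μ)
      atTop (𝓝 0) := by
  have hpow : ∀ c s x : ℝ, |c * x + s| ^ 5 ≤ 16 * |c| ^ 5 * |x| ^ 5 + 16 * |s| ^ 5 := by
    intro c s x
    calc |c * x + s| ^ 5 ≤ (|c * x| + |s|) ^ 5 := by gcongr; exact abs_add_le _ _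
      _ ≤ 2 ^ 4 * (|c * x| ^ 5 + |s| ^ 5) := add_pow_le (abs_nonneg _) (abs_nonneg _) 5
      _ = 16 * |c| ^ 5 * |x| ^ 5 + 16 * |s| ^ 5 := by rw [abs_mul, mul_pow]; ring
  have hv := (tendsto_inv_atTop_nhds_zero_nat (𝕜 := ℝ)).prodMk_nhds h5
  have hP : Continuous fun p : ℝ × ℝ => 16 * |1 + l * p.1| ^ 5 * p.2 + 16 * |b| ^ 5 * p.1 ^ 3 := by
    fun_prop
  have hbound := (hP.tendsto _).comp hv
  simp only [mul_zero, add_zero, zero_pow three_ne_zero] at hbound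
  refine squeeze_zero' (Eventually.of_forall fun n => by positivity) ?_ hbound
  filter_upwards [eventually_ne_atTop 0] with n hn
  calc (n : ℝ) ^ 2 * ∫ ω, |(1 + l / n) * e n ω + b / n| ^ 5 ∂μ
      ≤ (n : ℝ) ^ 2 * ∫ ω, (16 * |1 + l / n| ^ 5 * |e n ω| ^ 5 + 16 * |b / n| ^ 5) ∂μ := by
        refine mul_le_mul_of_nonneg_left ?_ (by positivity)
        exact integral_mono_of_nonneg (Eventually.of_forall fun _ => by positivity)
          (((he n).const_mul _).add (integrable_const _)) (Eventually.of_forall fun _ => hpow _ _ _)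
    _ = _ := by
        rw [integral_add ((he n).const_mul _) (integrable_const _), integral_const_mul,
          integral_const, probReal_univ, smul_eq_mul, one_mul, abs_div, Nat.abs_cast]
        simp only [Function.comp_apply]
        field_simp

theorem tendsto_sq_mul_integral_adjusted_sub {θ σ2 l M : ℝ} {θhat : ℕ → Ω → ℝ} {R : ℝ → ℝ}
    (he : ∀ n k, Integrable (fun ω => (θhat n ω - θ) ^ k) μ)
    (h1 : Tendsto (fun n : ℕ => (n : ℝ) * ∫ ω, (θhat n ω - θ) ∂μ) atTop (𝓝 0))
    (h2 : Tendsto (fun n : ℕ => (n : ℝ) * ∫ ω, (θhat n ω - θ) ^ 2 ∂μ) atTop (𝓝 σ2))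
    (h3 : Tendsto (fun n : ℕ => (n : ℝ) * ∫ ω, (θhat n ω - θ) ^ 3 ∂μ) atTop (𝓝 0))
    (h4 : Tendsto (fun n : ℕ => (n : ℝ) * ∫ ω, (θhat n ω - θ) ^ 4 ∂μ) atTop (𝓝 0))
    (h5 : Tendsto (fun n : ℕ => (n : ℝ) ^ 2 * ∫ ω, |θhat n ω - θ| ^ 5 ∂μ) atTop (𝓝 0))
    (hdiff : ∀ k < 5, Differentiable ℝ (iteratedDeriv k R)) (hR1 : deriv R θ = 0)
    (hM : ∀ x, |iteratedDeriv 5 R x| ≤ M)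
    (hRX : ∀ n, Integrable (fun ω => R (θhat n ω)) μ)
    (hRY : ∀ n : ℕ, Integrable (fun ω => R (θhat n ω * (1 + l / n))) μ) :
    Tendsto (fun n : ℕ => (n : ℝ) ^ 2 *
      (∫ ω, R (θhat n ω * (1 + l / n)) ∂μ - ∫ ω, R (θhat n ω) ∂μ)) atTop
      (𝓝 (iteratedDeriv 2 R θ * (l * σ2 + l ^ 2 * θ ^ 2 / 2)
        + iteratedDeriv 3 R θ * l * θ * σ2 / 2)) := by
  have hshift : ∀ (n : ℕ) ω,
      θhat n ω * (1 + l / n) - θ = (1 + l / n) * (θhat n ω - θ) + l * θ / n :=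
    fun n ω => by ring
  have heY : ∀ (n : ℕ) k, Integrable (fun ω => (θhat n ω * (1 + l / n) - θ) ^ k) μ := by
    intro n k
    simp_rw [hshift]
    exact integrable_affine_pow (fun j _ => he n j) _ _
  have he5 : ∀ n, Integrable (fun ω => |θhat n ω - θ| ^ 5) μ :=
    fun n => (he n 5).abs.congr (ae_of_all _ fun _ => abs_pow _ _)
  have hY5 : Tendsto (fun n : ℕ => (n : ℝ) ^ 2 * ∫ ω, |θhat n ω * (1 + l / n) - θ| ^ 5 ∂μ)
      atTop (𝓝 0) := by
    simp_rw [hshift]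
    exact tendsto_sq_mul_integral_abs_shift_pow_five he5 h5 l (l * θ)
  have hremX := tendsto_mul_integral_sub_taylor (n := 3) hdiff hM hRX (fun n k _ => he n k) h5
  have hremY := tendsto_mul_integral_sub_taylor (n := 3) hdiff hM hRY (fun n k _ => heY n k) hY5
  have hm2 := tendsto_sq_mul_integral_shift_sq he h1 h2 l (l * θ)
  have hm3 := tendsto_sq_mul_integral_shift_cube he h1 h2 h3 l (l * θ)
  have hm4 := tendsto_sq_mul_integral_shift_fourth he h1 h2 h3 h4 l (l * θ)
  convert (hremY.sub hremX).add ((hm2.const_mul (iteratedDeriv 2 R θ / 2)).add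
    ((hm3.const_mul (iteratedDeriv 3 R θ / 6)).add (hm4.const_mul (iteratedDeriv 4 R θ / 24))))
    using 2 with n
  · simp only [hshift, hR1, Finset.sum_range_succ, Finset.range_one, Finset.sum_singleton,
      iteratedDeriv_zero, iteratedDeriv_one, Nat.factorial_zero, Nat.factorial_one,
      Nat.factorial_two, Nat.reduceAdd, Nat.cast_one, Nat.cast_ofNat, div_one, pow_zero, pow_one,
      integral_const, probReal_univ, smul_eq_mul, mul_one, zero_mul, add_zero]
    ring
  · ring

end Adjustment

theorem stmt_9_general
    {Ω : Type*} [MeasurableSpace Ω] (μ : Measure Ω) [IsProbabilityMeasure μ]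
    (θ : ℝ) (hθ : θ ≠ 0)
    (θhat : ℕ → Ω → ℝ) (hmeas : ∀ n, Measurable (θhat n))
    (hmom : ∀ (n k : ℕ), Integrable (fun ω => |θhat n ω - θ| ^ k) μ)
    (σ2 : ℝ)
    -- (A1.1) root-n consistency
    (hA11 : Tendsto (fun n : ℕ => (n : ℝ) * ∫ ω, (θhat n ω - θ) ^ 2 ∂μ) atTop (nhds σ2))
    -- (A1.2) diminishing bias
    (hA12 : (fun n : ℕ => ∫ ω, (θhat n ω - θ) ∂μ) =o[atTop] fun n : ℕ => (n : ℝ)⁻¹)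
    -- (A1.3) higher-order moments
    (hA13 : ∀ k : ℕ, 3 ≤ k →
      (fun n : ℕ => ∫ ω, |θhat n ω - θ| ^ k ∂μ) =O[atTop]
        fun n : ℕ => (n : ℝ) ^ (-(k : ℝ) / 2))
    (R : ℝ → ℝ)
    -- R is five times differentiable
    (hdiff : ∀ k < 5, Differentiable ℝ (iteratedDeriv k R))
    -- (A2.1)
    (hA21a : deriv R θ = 0) (hA21b : iteratedDeriv 2 R θ < 0)
    -- (A2.2) derivative-ratio condition
    (C : ℝ) (hA22 : iteratedDeriv 3 R θ / iteratedDeriv 2 R θ = C / θ)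
    -- (A2.3) bounded fifth derivative
    (M : ℝ) (hA23 : ∀ x : ℝ, |iteratedDeriv 5 R x| ≤ M)
    -- expectations of the rewards exist
    (hRint : ∀ (n : ℕ) (c : ℝ), Integrable (fun ω => R (θhat n ω * c)) μ) :
    Tendsto
      (fun n : ℕ => (n : ℝ) ^ 2 *
        ((∫ ω, R (θhat n ω * (1 + (-(C + 2) * σ2 / (2 * θ ^ 2)) / (n : ℝ))) ∂μ) -
          ∫ ω, R (θhat n ω) ∂μ))
      atTop (nhds (-(iteratedDeriv 2 R θ) * (C + 2) ^ 2 * σ2 ^ 2 / (8 * θ ^ 2))) ∧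
    0 ≤ -(iteratedDeriv 2 R θ) * (C + 2) ^ 2 * σ2 ^ 2 / (8 * θ ^ 2) := by
  have he : ∀ n k, Integrable (fun ω => (θhat n ω - θ) ^ k) μ := fun n k =>
    (hmom n k).mono' (((hmeas n).sub_const θ).pow_const k).aestronglyMeasurable
      (ae_of_all _ fun ω => by rw [Real.norm_eq_abs, abs_pow])
  have h1 : Tendsto (fun n : ℕ => (n : ℝ) * ∫ ω, (θhat n ω - θ) ∂μ) atTop (𝓝 0) := by
    simpa [div_inv_eq_mul, mul_comm] using hA12.tendsto_div_nhds_zero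
  have hd3 : iteratedDeriv 3 R θ = C * iteratedDeriv 2 R θ / θ := by
    rw [div_eq_div_iff hA21b.ne hθ] at hA22
    field_simp
    linarith
  refine ⟨?_, ?_⟩
  · convert tendsto_sq_mul_integral_adjusted_sub he h1 hA11
      (tendsto_natCast_mul_integral_pow le_rfl (hA13 3 le_rfl))
      (tendsto_natCast_mul_integral_pow (by norm_num) (hA13 4 (by norm_num)))
      (tendsto_pow_mul_of_isBigO_rpow (hA13 5 (by norm_num)) (s := 2) (by norm_num))
      hdiff hA21a hA23 (fun n => by simpa using hRint n 1) (fun n => hRint n _) using 2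
    rw [hd3]
    field_simp
    ring
  · have : 0 ≤ -iteratedDeriv 2 R θ := by linarith
    positivity

/-- Oracle adjustment, single parameter: under regularity of the estimator
(A1.1)–(A1.3) and structure of the surrogate reward (A2.1)–(A2.3), the oracle adjustment
`λ* = −(C+2)σ²/(2θ²)` improves the expected reward over PTO at rate `n⁻²`, with asymptotic
improvement `−R''(θ)(C+2)²σ⁴/(8θ²) ≥ 0`. -/
theorem stmt_9
    {Ω : Type*} [MeasurableSpace Ω] (μ : Measure Ω) [IsProbabilityMeasure μ]
    (θ : ℝ) (hθ : θ ≠ 0)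
    (θhat : ℕ → Ω → ℝ) (hmeas : ∀ n, Measurable (θhat n))
    (hmom : ∀ (n k : ℕ), Integrable (fun ω => |θhat n ω - θ| ^ k) μ)
    (σ2 : ℝ) (hσ2 : 0 < σ2)
    -- (A1.1) root-n consistency
    (hA11 : Tendsto (fun n : ℕ => (n : ℝ) * ∫ ω, (θhat n ω - θ) ^ 2 ∂μ) atTop (nhds σ2))
    -- (A1.2) diminishing bias
    (hA12 : (fun n : ℕ => ∫ ω, (θhat n ω - θ) ∂μ) =o[atTop] fun n : ℕ => (n : ℝ)⁻¹)
    -- (A1.3) higher-order moments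
    (hA13 : ∀ k : ℕ, 3 ≤ k →
      (fun n : ℕ => ∫ ω, |θhat n ω - θ| ^ k ∂μ) =O[atTop]
        fun n : ℕ => (n : ℝ) ^ (-(k : ℝ) / 2))
    (R : ℝ → ℝ)
    -- R is five times differentiable
    (hdiff : ∀ k < 5, Differentiable ℝ (iteratedDeriv k R))
    -- (A2.1)
    (hA21a : deriv R θ = 0) (hA21b : iteratedDeriv 2 R θ < 0)
    -- (A2.2) derivative-ratio condition
    (C : ℝ) (hA22 : iteratedDeriv 3 R θ / iteratedDeriv 2 R θ = C / θ)
    -- (A2.3) bounded fifth derivative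
    (M : ℝ) (hM : 0 < M) (hA23 : ∀ x : ℝ, |iteratedDeriv 5 R x| ≤ M)
    -- expectations of the rewards exist
    (hRint : ∀ (n : ℕ) (c : ℝ), Integrable (fun ω => R (θhat n ω * c)) μ) :
    Tendsto
      (fun n : ℕ => (n : ℝ) ^ 2 *
        ((∫ ω, R (θhat n ω * (1 + (-(C + 2) * σ2 / (2 * θ ^ 2)) / (n : ℝ))) ∂μ) -
          ∫ ω, R (θhat n ω) ∂μ))
      atTop (nhds (-(iteratedDeriv 2 R θ) * (C + 2) ^ 2 * σ2 ^ 2 / (8 * θ ^ 2))) ∧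
    0 ≤ -(iteratedDeriv 2 R θ) * (C + 2) ^ 2 * σ2 ^ 2 / (8 * θ ^ 2) :=
  stmt_9_general μ θ hθ θhat hmeas hmom σ2 hA11 hA12 hA13 R hdiff hA21a hA21b C hA22 M hA23 hRint
end

section
/- (Data-driven plug-in adjustment, single parameter.) Let θ ≠ 0 and let (θ̂_n) and (σ̂_n²) be sequences of real-valued random variables on a common probability space satisfying: (A1.1) lim_{n→∞} n·E[(θ̂_n − θ)²] = σ² for some constant σ² > 0; (A1.2) E[θ̂_n − θ] = o(n⁻¹); (A1.3) E[|θ̂_n − θ|^k] = O(n^{−k/2}) for every integer k ≥ 3; (A3.1) E[σ̂_n² − σ²] = o(n⁻¹); (A3.2) E[(σ̂_n² − σ²)^j] = O(n^{−j}) for every integer j ≥ 2; (A3.3) E[(θ̂_n − θ)(σ̂_n² − σ²)] = o(n⁻¹); (A4) there exists ε > 0 with |θ̂_n| ≥ ε almost surely for all n. Let R_θ : ℝ → ℝ be five times differentiable with R_θ'(θ) = 0, R_θ''(θ) < 0, R_θ'''(θ)/R_θ''(θ) = C/θ for a constant C, and |R_θ^{(5)}(x)| ≤ M for all x ∈ ℝ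 and some M > 0. Define the random adjustment coefficient λ_n* = (2 − C)·σ̂_n²/(2·θ̂_n²). Then lim_{n→∞} n²·( E[R_θ(θ̂_n·(1 + λ_n*/n))] − E[R_θ(θ̂_n)] ) = −R_θ''(θ)·(2 − C)²·σ⁴/(8θ²), and this limit is nonnegative. -/
/-!
Write `D = θ̂ - θ`, `T = σ̂² - σ²` and `c = (2 - C)/2`, so that the adjusted estimator is
`θ̂ + c σ̂² / (θ̂ n)`. By Taylor's theorem with a bounded fifth derivative, `R` agrees with its
quartic Taylor polynomial at `θ` up to `M |z - θ|⁵`. For the quartic, `n²` times the change of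
reward is computed exactly: it is `v₀ (2a₂ nD + (3a₃ - 2a₂/θ) nD² + a₂ v₀)` with `v₀ = cσ²/θ`,
plus finitely many terms, each a product of `√n D`, `n T`, `1/θ̂` (bounded by (A4)) and at least
one factor `n^{-1/2}`. Hence the error is `O(S⁵/√n)` for the error scale
`S = max(1, |√n D|, |n T|)`, and `E S⁶ = O(1)` by (A1.3) and (A3.2). Taking expectations,
(A1.1) and (A1.2) give the limit `v₀ ((3a₃ - 2a₂/θ) σ² + a₂ v₀)`, which equals
`-R''(θ) (2 - C)² σ⁴ / (8θ²)` once `a₂ = R''(θ)/2` and `a₃ = R'''(θ)/6 = C R''(θ)/(6θ)` are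
inserted.
-/

open MeasureTheory Filter Asymptotics Real Finset
open scoped Nat Topology

theorem abs_sub_le_mul_abs_sub_pow_succ {f f' : ℝ → ℝ} {θ K : ℝ} {m : ℕ}
    (hf : ∀ x, HasDerivAt f (f' x) x) (hf' : ∀ x, |f' x| ≤ K * |x - θ| ^ m) (x : ℝ) :
    |f x - f θ| ≤ K * |x - θ| ^ (m + 1) := by
  have hK : 0 ≤ K := by simpa using (abs_nonneg _).trans (hf' (θ + 1))
  have hseg : ∀ y ∈ Set.uIcc θ x, ‖deriv f y‖ ≤ K * |x - θ| ^ m := fun y hy => by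
    rw [(hf y).deriv, Real.norm_eq_abs]
    exact (hf' y).trans <| mul_le_mul_of_nonneg_left
      (pow_le_pow_left₀ (abs_nonneg _) (Set.abs_sub_left_of_mem_uIcc hy) m) hK
  calc |f x - f θ|
      ≤ K * |x - θ| ^ m * ‖x - θ‖ := (convex_uIcc θ x).norm_image_sub_le_of_norm_deriv_le
        (fun y _ => (hf y).differentiableAt) hseg Set.left_mem_uIcc Set.right_mem_uIcc
    _ = K * |x - θ| ^ (m + 1) := by rw [Real.norm_eq_abs, pow_succ, mul_assoc]

theorem hasDerivAt_taylor_sum (c : ℕ → ℝ) (θ x : ℝ) (N : ℕ) :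
    HasDerivAt (fun y => ∑ k ∈ range (N + 1), c k / k ! * (y - θ) ^ k)
      (∑ k ∈ range N, c (k + 1) / k ! * (x - θ) ^ k) x := by
  have hterm : ∀ k ∈ range (N + 1), HasDerivAt (fun y => c k / k ! * (y - θ) ^ k)
      (c k / k ! * (k * (x - θ) ^ (k - 1))) x := fun k _ =>
    (((hasDerivAt_id x).sub_const θ).pow k).const_mul _ |>.congr_deriv (by simp)
  refine (HasDerivAt.fun_sum hterm).congr_deriv ?_
  rw [sum_range_succ']
  simp only [Nat.cast_zero, zero_mul, mul_zero, add_zero, Nat.cast_add, Nat.cast_one,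
    Nat.add_sub_cancel, Nat.factorial_succ, Nat.cast_mul]
  refine sum_congr rfl fun k _ => ?_
  field_simp

theorem abs_sub_taylor_le {θ M : ℝ} (N : ℕ) {f : ℝ → ℝ}
    (hf : ∀ k ≤ N, Differentiable ℝ (iteratedDeriv k f))
    (hM : ∀ x, |iteratedDeriv (N + 1) f x| ≤ M) (x : ℝ) :
    |f x - ∑ k ∈ range (N + 1), iteratedDeriv k f θ / k ! * (x - θ) ^ k|
      ≤ M * |x - θ| ^ (N + 1) := by
  induction N generalizing f x with
  | zero =>
    simpa using abs_sub_le_mul_abs_sub_pow_succ (m := 0)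
      (fun y => ((hf 0 le_rfl) y).hasDerivAt) (fun y => by simpa using hM y) x
  | succ N ih =>
    have hderiv := fun y => ih (f := deriv f)
      (fun k hk => by simpa only [← iteratedDeriv_succ'] using hf (k + 1) (by omega))
      (fun y => by simpa only [← iteratedDeriv_succ'] using hM y) y
    simp only [← iteratedDeriv_succ'] at hderiv
    have := abs_sub_le_mul_abs_sub_pow_succ (θ := θ)
      (f := fun y => f y - ∑ k ∈ range (N + 2), iteratedDeriv k f θ / k ! * (y - θ) ^ k)
      (fun y => (((hf 0 (by omega)) y).hasDerivAt.sub (hasDerivAt_taylor_sum _ θ y (N + 1))))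
      hderiv x
    simpa [sum_range_succ' _ (N + 1)] using this

def quartic (a2 a3 a4 θ z : ℝ) : ℝ := a2 * (z - θ) ^ 2 + a3 * (z - θ) ^ 3 + a4 * (z - θ) ^ 4

theorem abs_sub_quartic_le {R : ℝ → ℝ} {θ M : ℝ}
    (hdiff : ∀ k < 5, Differentiable ℝ (iteratedDeriv k R))
    (hbd : ∀ x, |iteratedDeriv 5 R x| ≤ M) (hcrit : deriv R θ = 0) (z : ℝ) :
    |R z - (R θ + quartic (iteratedDeriv 2 R θ / 2) (iteratedDeriv 3 R θ / 6)
      (iteratedDeriv 4 R θ / 24) θ z)| ≤ M * |z - θ| ^ 5 := by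
  have h := abs_sub_taylor_le (θ := θ) 4 (fun k hk => hdiff k (by omega)) hbd z
  simp only [sum_range_succ, sum_range_zero, iteratedDeriv_zero, iteratedDeriv_one, hcrit]
    at h
  convert h using 3
  simp [quartic, Nat.factorial]
  ring

section MonomialBounds

/-! Bounds `f = O(S^a r^b)`; below, `S` is the error scale and `r = n^{-1/2}`. -/

variable {ι : Type*} {l : Filter ι} {S r f g n : ι → ℝ} {a b a' b' : ℕ}

theorem isBigO_const_monomial (c : ℝ) : (fun _ => c) =O[l] fun i => S i ^ 0 * r i ^ 0 :=
  (isBigO_const_const c one_ne_zero l).congr_right fun _ => by simp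

theorem Asymptotics.IsBigO.monomial_mul (hf : f =O[l] fun i => S i ^ a * r i ^ b)
    (hg : g =O[l] fun i => S i ^ a' * r i ^ b') :
    (fun i => f i * g i) =O[l] fun i => S i ^ (a + a') * r i ^ (b + b') :=
  (hf.mul hg).congr_right fun _ => by ring

theorem Asymptotics.IsBigO.monomial_pow (hf : f =O[l] fun i => S i ^ a * r i ^ b) (k : ℕ) :
    (fun i => f i ^ k) =O[l] fun i => S i ^ (a * k) * r i ^ (b * k) :=
  (hf.pow k).congr_right fun _ => by ring

theorem Asymptotics.IsBigO.monomial_mono (hf : f =O[l] fun i => S i ^ a * r i ^ b)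
    (hS : ∀ᶠ i in l, 1 ≤ S i) (hr : ∀ᶠ i in l, 0 ≤ r i ∧ r i ≤ 1) (ha : a ≤ a') (hb : b' ≤ b) :
    f =O[l] fun i => S i ^ a' * r i ^ b' := by
  refine hf.trans <| IsBigO.of_bound 1 ?_
  filter_upwards [hS, hr] with i hSi ⟨hr0, hr1⟩
  have hS0 : 0 ≤ S i := zero_le_one.trans hSi
  rw [one_mul, Real.norm_of_nonneg (by positivity), Real.norm_of_nonneg (by positivity)]
  exact mul_le_mul (pow_le_pow_right₀ hSi ha) (pow_le_pow_of_le_one hr0 hr1 hb)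
    (by positivity) (by positivity)

theorem Asymptotics.IsBigO.monomial_mul_of_mul_sq_eq_one
    (hf : f =O[l] fun i => S i ^ a * r i ^ (b + 2)) (hn : ∀ᶠ i in l, n i * r i ^ 2 = 1) :
    (fun i => n i * f i) =O[l] fun i => S i ^ a * r i ^ b := by
  refine ((isBigO_refl n l).mul hf).congr' EventuallyEq.rfl ?_
  filter_upwards [hn] with i hi
  linear_combination S i ^ a * r i ^ b * hi

end MonomialBounds

noncomputable def adjustedEstimate (C n x s : ℝ) : ℝ := x * (1 + ((2 - C) * s / (2 * x ^ 2)) / n)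

/-- The part of `n² (R (adjustedEstimate C n x s) - R x)` that survives in expectation when
`R - R θ = quartic a2 a3 a4 θ`; here `D = x - θ`, `c = (2 - C)/2`, and `cσ²/θ` is the limit of
`n (adjustedEstimate C n x s - x) = c s / x`. -/
noncomputable def leadingGain (a2 a3 c θ σ2 n D : ℝ) : ℝ :=
  c * σ2 / θ * (2 * a2 * (n * D) + (3 * a3 - 2 * a2 / θ) * (n * D ^ 2) + a2 * (c * σ2 / θ))

theorem quartic_gain_sub_leadingGain_eq {θ σ2 C a2 a3 a4 n x s : ℝ} (hθ : θ ≠ 0) (hn : n ≠ 0)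
    (hx : x ≠ 0) :
    let c := (2 - C) / 2
    let v := c * (s * x⁻¹)
    let w := c * (x⁻¹ * (s - σ2 - σ2 / θ * (x - θ)))
    n ^ 2 * (quartic a2 a3 a4 θ (adjustedEstimate C n x s) - quartic a2 a3 a4 θ x)
        - leadingGain a2 a3 c θ σ2 n (x - θ)
      = 2 * a2 * c * (x⁻¹ * (n * ((x - θ) * (s - σ2)) + σ2 / θ ^ 2 * (n * (x - θ) ^ 3)))
        + 3 * a3 * (n * (x - θ) ^ 2 * w) + 4 * a4 * (n * (x - θ) ^ 3 * v)
        + a2 * (w * (v + c * σ2 / θ)) + (3 * a3 * (x - θ) + 6 * a4 * (x - θ) ^ 2) * v ^ 2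
        + (a3 + 4 * a4 * (x - θ)) * v ^ 3 * n⁻¹ + a4 * (v ^ 4 * (n⁻¹) ^ 2) := by
  intro c v w
  simp only [quartic, adjustedEstimate, leadingGain, c, v, w]
  field_simp
  ring

section Expansion

variable {ι : Type*} {l : Filter ι} {S r n x s : ι → ℝ} {θ σ2 C a2 a3 a4 : ℝ} {b : ℕ}

theorem isBigO_inv_of_mul_sq_eq_one (hn : ∀ᶠ i in l, n i * r i ^ 2 = 1) :
    (fun i => (n i)⁻¹) =O[l] fun i => S i ^ 0 * r i ^ 2 :=
  IsBigO.of_bound 1 <| by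
    filter_upwards [hn] with i hi
    simp [inv_eq_of_mul_eq_one_right hi]

theorem isBigO_of_sub_const (hS : ∀ᶠ i in l, 1 ≤ S i) (hr : ∀ᶠ i in l, 0 ≤ r i ∧ r i ≤ 1)
    (hT : (fun i => s i - σ2) =O[l] fun i => S i ^ 1 * r i ^ b) :
    s =O[l] fun i => S i ^ 1 * r i ^ 0 :=
  (((isBigO_const_monomial σ2).monomial_mono hS hr (by norm_num) le_rfl).add
    (hT.monomial_mono hS hr le_rfl b.zero_le)).congr_left fun i => by simp

theorem isBigO_adjustedEstimate_sub (hS : ∀ᶠ i in l, 1 ≤ S i)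
    (hr : ∀ᶠ i in l, 0 ≤ r i ∧ r i ≤ 1) (hn : ∀ᶠ i in l, n i * r i ^ 2 = 1)
    (hx : ∀ᶠ i in l, x i ≠ 0) (hu : (fun i => (x i)⁻¹) =O[l] fun i => S i ^ 0 * r i ^ 0)
    (hD : (fun i => x i - θ) =O[l] fun i => S i ^ 1 * r i ^ 1)
    (hT : (fun i => s i - σ2) =O[l] fun i => S i ^ 1 * r i ^ 2) :
    (fun i => adjustedEstimate C (n i) (x i) (s i) - θ) =O[l] fun i => S i ^ 1 * r i ^ 1 := by
  refine (hD.add ((((isBigO_of_sub_const hS hr hT).monomial_mul hu).monomial_mul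
    (isBigO_inv_of_mul_sq_eq_one hn)).const_mul_left ((2 - C) / 2) |>.monomial_mono hS hr
    le_rfl (by norm_num))).congr' ?_ EventuallyEq.rfl
  filter_upwards [hx] with i hxi
  simp only [adjustedEstimate]
  field_simp
  ring

theorem isBigO_quartic_gain_sub_leadingGain (hθ : θ ≠ 0)
    (hS : ∀ᶠ i in l, 1 ≤ S i) (hr : ∀ᶠ i in l, 0 ≤ r i ∧ r i ≤ 1)
    (hn : ∀ᶠ i in l, n i * r i ^ 2 = 1) (hx : ∀ᶠ i in l, x i ≠ 0)
    (hu : (fun i => (x i)⁻¹) =O[l] fun i => S i ^ 0 * r i ^ 0)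
    (hD : (fun i => x i - θ) =O[l] fun i => S i ^ 1 * r i ^ 1)
    (hT : (fun i => s i - σ2) =O[l] fun i => S i ^ 1 * r i ^ 2) :
    (fun i => n i ^ 2 * (quartic a2 a3 a4 θ (adjustedEstimate C (n i) (x i) (s i))
        - quartic a2 a3 a4 θ (x i)) - leadingGain a2 a3 ((2 - C) / 2) θ σ2 (n i) (x i - θ))
      =O[l] fun i => S i ^ 5 * r i ^ 1 := by
  have mono : ∀ {f : ι → ℝ} {a b a' b' : ℕ}, f =O[l] (fun i => S i ^ a * r i ^ b) →
      a ≤ a' → b' ≤ b → f =O[l] fun i => S i ^ a' * r i ^ b' :=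
    fun hf ha hb => hf.monomial_mono hS hr ha hb
  set c := (2 - C) / 2
  have hninv := isBigO_inv_of_mul_sq_eq_one (S := S) hn
  have hv : (fun i => c * (s i * (x i)⁻¹)) =O[l] fun i => S i ^ 1 * r i ^ 0 :=
    ((isBigO_of_sub_const hS hr hT).monomial_mul hu).const_mul_left c
  have hw : (fun i => c * ((x i)⁻¹ * (s i - σ2 - σ2 / θ * (x i - θ))))
      =O[l] fun i => S i ^ 1 * r i ^ 1 :=
    (hu.monomial_mul ((mono hT le_rfl (by norm_num)).sub (hD.const_mul_left _))).const_mul_left c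
  have hnD2 := (hD.monomial_pow 2).monomial_mul_of_mul_sq_eq_one (b := 0) hn
  have hnD3 := (hD.monomial_pow 3).monomial_mul_of_mul_sq_eq_one (b := 1) hn
  have hnDT := (hD.monomial_mul hT).monomial_mul_of_mul_sq_eq_one (b := 1) hn
  have h1 := (hu.monomial_mul ((mono hnDT (by norm_num) le_rfl).add
    (hnD3.const_mul_left (σ2 / θ ^ 2)))).const_mul_left (2 * a2 * c)
  have h2 := (hnD2.monomial_mul hw).const_mul_left (3 * a3)
  have h3 := (hnD3.monomial_mul hv).const_mul_left (4 * a4)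
  have h4 := (hw.monomial_mul (hv.add (mono (isBigO_const_monomial (c * σ2 / θ))
    (by norm_num) le_rfl))).const_mul_left a2
  have h5 := ((mono (hD.const_mul_left (3 * a3)) (by norm_num) le_rfl).add
    (mono ((hD.monomial_pow 2).const_mul_left (6 * a4)) le_rfl (by norm_num))).monomial_mul
    (hv.monomial_pow 2)
  have h6 := (((mono (isBigO_const_monomial a3) (by norm_num) le_rfl).add
    (mono (hD.const_mul_left (4 * a4)) le_rfl (by norm_num))).monomial_mul
    (hv.monomial_pow 3)).monomial_mul hninv
  have h7 := ((hv.monomial_pow 4).monomial_mul (hninv.monomial_pow 2)).const_mul_left a4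
  refine ((((((mono h1 (by norm_num) le_rfl).add (mono h2 (by norm_num) le_rfl)).add
    (mono h3 (by norm_num) le_rfl)).add (mono h4 (by norm_num) le_rfl)).add
    (mono h5 (by norm_num) le_rfl)).add (mono h6 (by norm_num) (by norm_num))).add
    (mono h7 (by norm_num) (by norm_num)) |>.congr' ?_ EventuallyEq.rfl
  filter_upwards [hn, hx] with i hni hxi
  exact (quartic_gain_sub_leadingGain_eq hθ (left_ne_zero_of_mul_eq_one hni) hxi).symm

theorem isBigO_sq_mul_of_abs_le_pow_five {W : ℝ → ℝ} {M : ℝ} {z : ι → ℝ}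
    (hW : ∀ y, |W y| ≤ M * |y - θ| ^ 5) (hn : ∀ᶠ i in l, n i * r i ^ 2 = 1)
    (hz : (fun i => z i - θ) =O[l] fun i => S i ^ 1 * r i ^ 1) :
    (fun i => n i ^ 2 * W (z i)) =O[l] fun i => S i ^ 5 * r i ^ 1 := by
  have hWz : (fun i => W (z i)) =O[l] fun i => S i ^ 5 * r i ^ 5 :=
    (IsBigO.of_bound M (.of_forall fun i => by simpa using hW (z i))).trans (hz.monomial_pow 5)
  exact ((hWz.monomial_mul_of_mul_sq_eq_one hn).monomial_mul_of_mul_sq_eq_one hn).congr_left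
    fun i => by ring

theorem isBigO_gain_sub_leadingGain {R : ℝ → ℝ} {M ε : ℝ} (hθ : θ ≠ 0) (hε : 0 < ε)
    (hR : ∀ z, |R z - (R θ + quartic a2 a3 a4 θ z)| ≤ M * |z - θ| ^ 5)
    (hS : ∀ᶠ i in l, 1 ≤ S i) (hr : ∀ᶠ i in l, 0 ≤ r i ∧ r i ≤ 1)
    (hn : ∀ᶠ i in l, n i * r i ^ 2 = 1) (hx : ∀ᶠ i in l, ε ≤ |x i|)
    (hD : (fun i => x i - θ) =O[l] fun i => S i ^ 1 * r i ^ 1)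
    (hT : (fun i => s i - σ2) =O[l] fun i => S i ^ 1 * r i ^ 2) :
    (fun i => n i ^ 2 * (R (adjustedEstimate C (n i) (x i) (s i)) - R (x i))
        - leadingGain a2 a3 ((2 - C) / 2) θ σ2 (n i) (x i - θ))
      =O[l] fun i => S i ^ 5 * r i ^ 1 := by
  have hu : (fun i => (x i)⁻¹) =O[l] fun i => S i ^ 0 * r i ^ 0 :=
    IsBigO.of_bound ε⁻¹ <| hx.mono fun i hi => by simpa using inv_anti₀ hε hi
  have hx0 : ∀ᶠ i in l, x i ≠ 0 := hx.mono fun i hi => abs_pos.mp (hε.trans_le hi)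
  set W := fun z => R z - (R θ + quartic a2 a3 a4 θ z)
  refine (((isBigO_quartic_gain_sub_leadingGain (C := C) (a2 := a2) (a3 := a3) (a4 := a4)
    hθ hS hr hn hx0 hu hD hT).add (isBigO_sq_mul_of_abs_le_pow_five (W := W) hR hn
      (isBigO_adjustedEstimate_sub (C := C) hS hr hn hx0 hu hD hT))).sub
    (isBigO_sq_mul_of_abs_le_pow_five (W := W) hR hn hD)).congr_left fun i => ?_
  simp only [W]
  ring

end Expansion

/-- For `x = θ̂`, `s = σ̂²`, both `√n (x - θ)` and `n (s - σ²)` are bounded in `L⁶` by (A1.3)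
and (A3.2). -/
noncomputable def errorScale (θ σ2 n x s : ℝ) : ℝ := max (max 1 |√n * (x - θ)|) |n * (s - σ2)|

section ErrorScale

variable {θ σ2 n x s : ℝ}

theorem one_le_errorScale : 1 ≤ errorScale θ σ2 n x s :=
  le_max_of_le_left (le_max_left _ _)

theorem errorScale_pos : 0 < errorScale θ σ2 n x s :=
  zero_lt_one.trans_le one_le_errorScale

theorem abs_sub_le_errorScale_div_sqrt (hn : 0 < n) : |x - θ| ≤ errorScale θ σ2 n x s / √n := by
  have hn' := sqrt_pos.2 hn
  calc |x - θ| = |√n * (x - θ)| / √n := by rw [abs_mul, abs_of_pos hn']; field_simp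
    _ ≤ errorScale θ σ2 n x s / √n := by gcongr; exact le_max_of_le_left (le_max_right _ _)

theorem abs_sub_le_errorScale_div (hn : 0 < n) : |s - σ2| ≤ errorScale θ σ2 n x s / n := by
  calc |s - σ2| = |n * (s - σ2)| / n := by rw [abs_mul, abs_of_pos hn]; field_simp
    _ ≤ errorScale θ σ2 n x s / n := by gcongr; exact le_max_right _ _

theorem errorScale_pow_five_le (hn : 0 ≤ n) :
    errorScale θ σ2 n x s ^ 5 ≤ 1 + n ^ 3 * |x - θ| ^ 6 + n ^ 6 * (s - σ2) ^ 6 := by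
  have hδ : |√n * (x - θ)| ^ 6 = n ^ 3 * |x - θ| ^ 6 := by
    rw [abs_mul, abs_of_nonneg (sqrt_nonneg n), mul_pow, show (6 : ℕ) = 2 * 3 from rfl, pow_mul,
      sq_sqrt hn]
  have hτ : |n * (s - σ2)| ^ 6 = n ^ 6 * (s - σ2) ^ 6 := by
    rw [Even.pow_abs (by decide : Even 6), mul_pow]
  have hcases : errorScale θ σ2 n x s = 1 ∨ errorScale θ σ2 n x s = |√n * (x - θ)| ∨
      errorScale θ σ2 n x s = |n * (s - σ2)| := by
    unfold errorScale
    rcases max_choice (max 1 |√n * (x - θ)|) |n * (s - σ2)| with h | h <;> rw [h]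
    · exact (max_choice _ _).imp id Or.inl
    · exact Or.inr (Or.inr rfl)
  have hδ0 : 0 ≤ n ^ 3 * |x - θ| ^ 6 := by rw [← hδ]; positivity
  have hτ0 : 0 ≤ n ^ 6 * (s - σ2) ^ 6 := by rw [← hτ]; positivity
  calc errorScale θ σ2 n x s ^ 5
      ≤ errorScale θ σ2 n x s ^ 6 := pow_le_pow_right₀ one_le_errorScale (by norm_num)
    _ ≤ 1 + n ^ 3 * |x - θ| ^ 6 + n ^ 6 * (s - σ2) ^ 6 := by
      rcases hcases with h | h | h <;> rw [h] <;> linarith [hδ, hτ, one_pow (M := ℝ) 6]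

end ErrorScale

theorem isBigO_gain_sub_leadingGain_of_one_le {ι : Type*} {l : Filter ι} {n x s : ι → ℝ}
    {R : ℝ → ℝ} {θ σ2 C a2 a3 a4 M ε : ℝ} (hθ : θ ≠ 0) (hε : 0 < ε)
    (hR : ∀ z, |R z - (R θ + quartic a2 a3 a4 θ z)| ≤ M * |z - θ| ^ 5)
    (hn : ∀ᶠ i in l, 1 ≤ n i) (hx : ∀ᶠ i in l, ε ≤ |x i|) :
    (fun i => n i ^ 2 * (R (adjustedEstimate C (n i) (x i) (s i)) - R (x i))
        - leadingGain a2 a3 ((2 - C) / 2) θ σ2 (n i) (x i - θ))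
      =O[l] fun i => (1 + n i ^ 3 * |x i - θ| ^ 6 + n i ^ 6 * (s i - σ2) ^ 6) / √(n i) := by
  have hn0 : ∀ᶠ i in l, 0 < n i := hn.mono fun i hi => zero_lt_one.trans_le hi
  have hr : ∀ᶠ i in l, 0 ≤ (√(n i))⁻¹ ∧ (√(n i))⁻¹ ≤ 1 :=
    hn.mono fun i hi => ⟨by positivity, inv_le_one_of_one_le₀ (one_le_sqrt.2 hi)⟩
  have hnr : ∀ᶠ i in l, n i * (√(n i))⁻¹ ^ 2 = 1 :=
    hn0.mono fun i hi => by rw [inv_pow, sq_sqrt hi.le, mul_inv_cancel₀ hi.ne']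
  have hD : (fun i => x i - θ) =O[l]
      fun i => errorScale θ σ2 (n i) (x i) (s i) ^ 1 * (√(n i))⁻¹ ^ 1 :=
    IsBigO.of_norm_eventuallyLE <| hn0.mono fun i hi => by
      simpa [div_eq_mul_inv] using abs_sub_le_errorScale_div_sqrt (σ2 := σ2) (s := s i) hi
  have hT : (fun i => s i - σ2) =O[l]
      fun i => errorScale θ σ2 (n i) (x i) (s i) ^ 1 * (√(n i))⁻¹ ^ 2 :=
    IsBigO.of_norm_eventuallyLE <| hn0.mono fun i hi => by
      simpa [div_eq_mul_inv, inv_pow, sq_sqrt hi.le]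
        using abs_sub_le_errorScale_div (θ := θ) (x := x i) hi
  refine (isBigO_gain_sub_leadingGain hθ hε hR (.of_forall fun _ => one_le_errorScale) hr hnr hx
    hD hT).trans <| IsBigO.of_norm_eventuallyLE <| hn0.mono fun i hi => ?_
  have hS := errorScale_pos (θ := θ) (σ2 := σ2) (n := n i) (x := x i) (s := s i)
  dsimp only
  rw [Real.norm_of_nonneg (by positivity), pow_one, ← div_eq_mul_inv]
  gcongr
  exact errorScale_pow_five_le hi.le

theorem exists_ae_abs_gain_sub_leadingGain_le {Ω : Type*} [MeasurableSpace Ω] {μ : Measure Ω}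
    {R : ℝ → ℝ} {θ σ2 C a2 a3 a4 M ε : ℝ} (hθ : θ ≠ 0) (hε : 0 < ε)
    (hR : ∀ z, |R z - (R θ + quartic a2 a3 a4 θ z)| ≤ M * |z - θ| ^ 5)
    {X Y : ℕ → Ω → ℝ} (hX : ∀ n, ∀ᵐ ω ∂μ, ε ≤ |X n ω|) :
    ∃ K, ∀ᶠ n : ℕ in atTop, ∀ᵐ ω ∂μ,
      |(n : ℝ) ^ 2 * (R (adjustedEstimate C n (X n ω) (Y n ω)) - R (X n ω))
          - leadingGain a2 a3 ((2 - C) / 2) θ σ2 n (X n ω - θ)|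
        ≤ K * (1 + (n : ℝ) ^ 3 * |X n ω - θ| ^ 6 + (n : ℝ) ^ 6 * (Y n ω - σ2) ^ 6) / √n := by
  have hn : ∀ᶠ p : ℕ × Ω in atTop ×ˢ ae μ, (1 : ℝ) ≤ p.1 :=
    ((eventually_ge_atTop 1).prod_inl _).mono fun p hp => by exact_mod_cast hp
  have hx : ∀ᶠ p : ℕ × Ω in atTop ×ˢ ae μ, ε ≤ |X p.1 p.2| :=
    ((ae_all_iff.2 hX).prod_inr atTop).mono fun p hp => hp p.1
  obtain ⟨K, -, hK⟩ := (isBigO_gain_sub_leadingGain_of_one_le (C := C) (s := fun p => Y p.1 p.2)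
    (a2 := a2) (a3 := a3) (a4 := a4) (σ2 := σ2) hθ hε hR hn hx).exists_pos
  refine ⟨K, hK.bound.curry.mono fun n hn => hn.mono fun ω hω => ?_⟩
  dsimp only at hω
  rwa [Real.norm_eq_abs, Real.norm_eq_abs, abs_of_nonneg (a := (_ : ℝ) / _) (by positivity),
    ← mul_div_assoc] at hω

section Integrals

variable {Ω : Type*} [MeasurableSpace Ω] {μ : Measure Ω}

theorem isBigO_one_of_isBigO_inv_pow {f : ℕ → ℝ} {k : ℕ}
    (hf : f =O[atTop] fun n => ((n : ℝ) ^ k)⁻¹) :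
    (fun n : ℕ => (n : ℝ) ^ k * f n) =O[atTop] fun _ => (1 : ℝ) := by
  refine ((isBigO_refl (fun n : ℕ => (n : ℝ) ^ k) atTop).mul hf).trans
    (IsBigO.of_bound 1 (.of_forall fun n => ?_))
  rcases eq_or_ne ((n : ℝ) ^ k) 0 with h | h <;> simp [h]

theorem tendsto_integral_of_ae_abs_le_moments [IsFiniteMeasure μ] {E X Y : ℕ → Ω → ℝ} {K : ℝ}
    (hX : ∀ n, Integrable (fun ω => |X n ω| ^ 6) μ) (hY : ∀ n, Integrable (fun ω => Y n ω ^ 6) μ)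
    (hXm : (fun n : ℕ => (n : ℝ) ^ 3 * ∫ ω, |X n ω| ^ 6 ∂μ) =O[atTop] fun _ => (1 : ℝ))
    (hYm : (fun n : ℕ => (n : ℝ) ^ 6 * ∫ ω, Y n ω ^ 6 ∂μ) =O[atTop] fun _ => (1 : ℝ))
    (hE : ∀ᶠ n : ℕ in atTop, ∀ᵐ ω ∂μ,
      |E n ω| ≤ K * (1 + (n : ℝ) ^ 3 * |X n ω| ^ 6 + (n : ℝ) ^ 6 * Y n ω ^ 6) / √n) :
    Tendsto (fun n => ∫ ω, E n ω ∂μ) atTop (𝓝 0) := by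
  have hbound : ∀ n : ℕ, Integrable
      (fun ω => K * (1 + (n : ℝ) ^ 3 * |X n ω| ^ 6 + (n : ℝ) ^ 6 * Y n ω ^ 6) / √n) μ := fun n =>
    ((((integrable_const 1).add ((hX n).const_mul _)).add ((hY n).const_mul _)).const_mul
      K).div_const _
  have hval : ∀ n : ℕ,
      ∫ ω, K * (1 + (n : ℝ) ^ 3 * |X n ω| ^ 6 + (n : ℝ) ^ 6 * Y n ω ^ 6) / √n ∂μ
        = K * (μ.real Set.univ + (n : ℝ) ^ 3 * ∫ ω, |X n ω| ^ 6 ∂μ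
          + (n : ℝ) ^ 6 * ∫ ω, Y n ω ^ 6 ∂μ) * (√n)⁻¹ := fun n => by
    have hX' : Integrable (fun ω => 1 + (n : ℝ) ^ 3 * |X n ω| ^ 6) μ :=
      (integrable_const 1).add ((hX n).const_mul _)
    rw [integral_div, integral_const_mul, integral_add hX' ((hY n).const_mul _),
      integral_add (integrable_const 1) ((hX n).const_mul _), integral_const, integral_const_mul,
      integral_const_mul, smul_eq_mul, mul_one, div_eq_mul_inv]
  have hlim : Tendsto (fun n : ℕ => K * (μ.real Set.univ + (n : ℝ) ^ 3 * ∫ ω, |X n ω| ^ 6 ∂μ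
      + (n : ℝ) ^ 6 * ∫ ω, Y n ω ^ 6 ∂μ) * (√n)⁻¹) atTop (𝓝 0) := by
    refine ((((isBigO_const_const _ one_ne_zero _).add hXm).add hYm).const_mul_left K).mul
      (isBigO_refl (fun n : ℕ => (√(n : ℝ))⁻¹) atTop) |>.trans_tendsto ?_
    simpa [Function.comp_def] using
      tendsto_inv_atTop_zero.comp (tendsto_sqrt_atTop.comp tendsto_natCast_atTop_atTop)
  refine squeeze_zero_norm' (hE.mono fun n hn => ?_) hlim
  rw [← hval n]
  exact norm_integral_le_of_norm_le (hbound n) hn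

theorem integral_add_integral_sub_eq {f g h : Ω → ℝ} (c : ℝ)
    (hf : Integrable f μ) (hg : Integrable g μ) (hh : Integrable h μ) :
    ∫ ω, h ω ∂μ + ∫ ω, c * (f ω - g ω) - h ω ∂μ = c * (∫ ω, f ω ∂μ - ∫ ω, g ω ∂μ) := by
  rw [integral_sub (f := fun ω => c * (f ω - g ω)) ((hf.sub hg).const_mul c) hh,
    integral_const_mul, integral_sub hf hg]
  ring

theorem integrable_leadingGain {X : Ω → ℝ} {a2 a3 c θ σ2 n : ℝ} [IsFiniteMeasure μ]
    (hX : Integrable X μ) (hX2 : Integrable (fun ω => X ω ^ 2) μ) :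
    Integrable (fun ω => leadingGain a2 a3 c θ σ2 n (X ω)) μ :=
  ((((hX.const_mul _).const_mul _).add ((hX2.const_mul _).const_mul _)).add
    (integrable_const _)).const_mul _

theorem tendsto_integral_leadingGain [IsProbabilityMeasure μ] {X : ℕ → Ω → ℝ}
    {a2 a3 c θ σ2 : ℝ} (hX : ∀ n, Integrable (X n) μ)
    (hX2 : ∀ n, Integrable (fun ω => X n ω ^ 2) μ)
    (h1 : (fun n : ℕ => ∫ ω, X n ω ∂μ) =o[atTop] fun n => (n : ℝ)⁻¹)
    (h2 : Tendsto (fun n : ℕ => (n : ℝ) * ∫ ω, X n ω ^ 2 ∂μ) atTop (𝓝 σ2)) :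
    Tendsto (fun n : ℕ => ∫ ω, leadingGain a2 a3 c θ σ2 n (X n ω) ∂μ) atTop
      (𝓝 (c * σ2 / θ * ((3 * a3 - 2 * a2 / θ) * σ2 + a2 * (c * σ2 / θ)))) := by
  have h1' : Tendsto (fun n : ℕ => (n : ℝ) * ∫ ω, X n ω ∂μ) atTop (𝓝 0) :=
    h1.tendsto_div_nhds_zero.congr fun n => by rw [div_inv_eq_mul, mul_comm]
  have hval : ∀ n : ℕ, ∫ ω, leadingGain a2 a3 c θ σ2 n (X n ω) ∂μ
      = c * σ2 / θ * (2 * a2 * ((n : ℝ) * ∫ ω, X n ω ∂μ)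
        + (3 * a3 - 2 * a2 / θ) * ((n : ℝ) * ∫ ω, X n ω ^ 2 ∂μ) + a2 * (c * σ2 / θ)) := fun n => by
    have hlin : Integrable (fun ω => 2 * a2 * ((n : ℝ) * X n ω)
        + (3 * a3 - 2 * a2 / θ) * ((n : ℝ) * X n ω ^ 2)) μ :=
      (((hX n).const_mul _).const_mul _).add (((hX2 n).const_mul _).const_mul _)
    simp only [leadingGain]
    rw [integral_const_mul, integral_add hlin (integrable_const _), integral_add
      (((hX n).const_mul _).const_mul _) (((hX2 n).const_mul _).const_mul _)]
    simp [integral_const_mul]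
  simp only [hval]
  convert ((((h1'.const_mul (2 * a2)).add (h2.const_mul (3 * a3 - 2 * a2 / θ))).add
    tendsto_const_nhds).const_mul (c * σ2 / θ)) using 2
  ring

end Integrals

theorem stmt_12_general
    {Ω : Type*} [MeasurableSpace Ω] (μ : Measure Ω) [IsProbabilityMeasure μ]
    (θ : ℝ) (hθ : θ ≠ 0)
    (θhat : ℕ → Ω → ℝ) (hmeasθ : ∀ n, Measurable (θhat n))
    (σhat2 : ℕ → Ω → ℝ)
    (hmomθ : ∀ (n k : ℕ), Integrable (fun ω => |θhat n ω - θ| ^ k) μ)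
    (σ2 : ℝ)
    (hmomσ : ∀ (n j : ℕ), Integrable (fun ω => (σhat2 n ω - σ2) ^ j) μ)
    -- (A1.1) root-n consistency
    (hA11 : Tendsto (fun n : ℕ => (n : ℝ) * ∫ ω, (θhat n ω - θ) ^ 2 ∂μ) atTop (nhds σ2))
    -- (A1.2) diminishing bias
    (hA12 : (fun n : ℕ => ∫ ω, (θhat n ω - θ) ∂μ) =o[atTop] fun n : ℕ => (n : ℝ)⁻¹)
    -- (A1.3) higher-order moments
    (hA13 : ∀ k : ℕ, 3 ≤ k →
      (fun n : ℕ => ∫ ω, |θhat n ω - θ| ^ k ∂μ) =O[atTop]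
        fun n : ℕ => (n : ℝ) ^ (-(k : ℝ) / 2))
    -- (A3.2) higher moments of the variance estimator
    (hA32 : ∀ j : ℕ, 2 ≤ j →
      (fun n : ℕ => ∫ ω, (σhat2 n ω - σ2) ^ j ∂μ) =O[atTop]
        fun n : ℕ => ((n : ℝ) ^ j)⁻¹)
    -- (A4) estimator bounded away from zero
    (ε : ℝ) (hε : 0 < ε) (hA4 : ∀ n, ∀ᵐ ω ∂μ, ε ≤ |θhat n ω|)
    (R : ℝ → ℝ)
    -- R is five times differentiable
    (hdiff : ∀ k < 5, Differentiable ℝ (iteratedDeriv k R))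
    (hfoc : deriv R θ = 0) (hconc : iteratedDeriv 2 R θ < 0)
    -- derivative-ratio condition
    (C : ℝ) (hratio : iteratedDeriv 3 R θ / iteratedDeriv 2 R θ = C / θ)
    -- bounded fifth derivative
    (M : ℝ) (hbd : ∀ x : ℝ, |iteratedDeriv 5 R x| ≤ M)
    -- expectations of the rewards exist
    (hRint0 : ∀ n : ℕ, Integrable (fun ω => R (θhat n ω)) μ)
    (hRint1 : ∀ n : ℕ, Integrable
      (fun ω => R (θhat n ω *
        (1 + ((2 - C) * σhat2 n ω / (2 * θhat n ω ^ 2)) / (n : ℝ)))) μ) :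
    Tendsto
      (fun n : ℕ => (n : ℝ) ^ 2 *
        ((∫ ω, R (θhat n ω *
            (1 + ((2 - C) * σhat2 n ω / (2 * θhat n ω ^ 2)) / (n : ℝ))) ∂μ) -
          ∫ ω, R (θhat n ω) ∂μ))
      atTop (nhds (-(iteratedDeriv 2 R θ) * (2 - C) ^ 2 * σ2 ^ 2 / (8 * θ ^ 2))) ∧
    0 ≤ -(iteratedDeriv 2 R θ) * (2 - C) ^ 2 * σ2 ^ 2 / (8 * θ ^ 2) := by
  have hc3 : iteratedDeriv 3 R θ = C * iteratedDeriv 2 R θ / θ := by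
    rw [div_eq_div_iff hconc.ne hθ] at hratio
    field_simp
    linarith
  have hD : ∀ n, Integrable (fun ω => θhat n ω - θ) μ := fun n =>
    (integrable_norm_iff ((hmeasθ n).sub_const θ).aestronglyMeasurable).1 (by simpa using hmomθ n 1)
  have hD2 : ∀ n, Integrable (fun ω => (θhat n ω - θ) ^ 2) μ := fun n => by simpa using hmomθ n 2
  have hDm := isBigO_one_of_isBigO_inv_pow (k := 3) <| (hA13 6 (by norm_num)).congr_right
    fun n => by rw [neg_div, rpow_neg n.cast_nonneg]; norm_num
  obtain ⟨K, hK⟩ := exists_ae_abs_gain_sub_leadingGain_le (μ := μ) (C := C) (σ2 := σ2) hθ hε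
    (abs_sub_quartic_le hdiff hbd hfoc) hA4 (Y := σhat2)
  have herr := tendsto_integral_of_ae_abs_le_moments (hmomθ · 6) (hmomσ · 6) hDm
    (isBigO_one_of_isBigO_inv_pow (hA32 6 (by norm_num))) hK
  have hlead := tendsto_integral_leadingGain (a2 := iteratedDeriv 2 R θ / 2)
    (a3 := iteratedDeriv 3 R θ / 6) (c := (2 - C) / 2) (θ := θ) hD hD2 hA12 hA11
  have hlim : (2 - C) / 2 * σ2 / θ * ((3 * (iteratedDeriv 3 R θ / 6)
      - 2 * (iteratedDeriv 2 R θ / 2) / θ) * σ2 + iteratedDeriv 2 R θ / 2 * ((2 - C) / 2 * σ2 / θ))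
      + 0 = -(iteratedDeriv 2 R θ) * (2 - C) ^ 2 * σ2 ^ 2 / (8 * θ ^ 2) := by
    rw [hc3]
    field_simp
    ring
  exact ⟨hlim ▸ (hlead.add herr).congr fun n => integral_add_integral_sub_eq _ (hRint1 n)
      (hRint0 n) (integrable_leadingGain (hD n) (hD2 n)),
    div_nonneg (mul_nonneg (mul_nonneg (neg_nonneg.2 hconc.le) (sq_nonneg _)) (sq_nonneg _))
      (by positivity)⟩

/-- Data-driven plug-in adjustment, single parameter: the random
adjustment coefficient `λ_n* = (2−C)σ̂_n²/(2θ̂_n²)` improves the expected reward over PTO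
at rate `n⁻²`, with asymptotic improvement `−R''(θ)(2−C)²σ⁴/(8θ²) ≥ 0`. -/
theorem stmt_12
    {Ω : Type*} [MeasurableSpace Ω] (μ : Measure Ω) [IsProbabilityMeasure μ]
    (θ : ℝ) (hθ : θ ≠ 0)
    (θhat : ℕ → Ω → ℝ) (hmeasθ : ∀ n, Measurable (θhat n))
    (σhat2 : ℕ → Ω → ℝ) (hmeasσ : ∀ n, Measurable (σhat2 n))
    (hmomθ : ∀ (n k : ℕ), Integrable (fun ω => |θhat n ω - θ| ^ k) μ)
    (σ2 : ℝ) (hσ2 : 0 < σ2)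
    (hmomσ : ∀ (n j : ℕ), Integrable (fun ω => (σhat2 n ω - σ2) ^ j) μ)
    (hmomcr : ∀ n : ℕ, Integrable (fun ω => (θhat n ω - θ) * (σhat2 n ω - σ2)) μ)
    -- (A1.1) root-n consistency
    (hA11 : Tendsto (fun n : ℕ => (n : ℝ) * ∫ ω, (θhat n ω - θ) ^ 2 ∂μ) atTop (nhds σ2))
    -- (A1.2) diminishing bias
    (hA12 : (fun n : ℕ => ∫ ω, (θhat n ω - θ) ∂μ) =o[atTop] fun n : ℕ => (n : ℝ)⁻¹)
    -- (A1.3) higher-order moments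
    (hA13 : ∀ k : ℕ, 3 ≤ k →
      (fun n : ℕ => ∫ ω, |θhat n ω - θ| ^ k ∂μ) =O[atTop]
        fun n : ℕ => (n : ℝ) ^ (-(k : ℝ) / 2))
    -- (A3.1) variance estimator nearly unbiased
    (hA31 : (fun n : ℕ => ∫ ω, (σhat2 n ω - σ2) ∂μ) =o[atTop] fun n : ℕ => (n : ℝ)⁻¹)
    -- (A3.2) higher moments of the variance estimator
    (hA32 : ∀ j : ℕ, 2 ≤ j →
      (fun n : ℕ => ∫ ω, (σhat2 n ω - σ2) ^ j ∂μ) =O[atTop]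
        fun n : ℕ => ((n : ℝ) ^ j)⁻¹)
    -- (A3.3) asymptotically uncorrelated with the estimation error
    (hA33 : (fun n : ℕ => ∫ ω, (θhat n ω - θ) * (σhat2 n ω - σ2) ∂μ) =o[atTop]
      fun n : ℕ => (n : ℝ)⁻¹)
    -- (A4) estimator bounded away from zero
    (ε : ℝ) (hε : 0 < ε) (hA4 : ∀ n, ∀ᵐ ω ∂μ, ε ≤ |θhat n ω|)
    (R : ℝ → ℝ)
    -- R is five times differentiable
    (hdiff : ∀ k < 5, Differentiable ℝ (iteratedDeriv k R))
    (hfoc : deriv R θ = 0) (hconc : iteratedDeriv 2 R θ < 0)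
    -- derivative-ratio condition
    (C : ℝ) (hratio : iteratedDeriv 3 R θ / iteratedDeriv 2 R θ = C / θ)
    -- bounded fifth derivative
    (M : ℝ) (hM : 0 < M) (hbd : ∀ x : ℝ, |iteratedDeriv 5 R x| ≤ M)
    -- expectations of the rewards exist
    (hRint0 : ∀ n : ℕ, Integrable (fun ω => R (θhat n ω)) μ)
    (hRint1 : ∀ n : ℕ, Integrable
      (fun ω => R (θhat n ω *
        (1 + ((2 - C) * σhat2 n ω / (2 * θhat n ω ^ 2)) / (n : ℝ)))) μ) :
    Tendsto
      (fun n : ℕ => (n : ℝ) ^ 2 *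
        ((∫ ω, R (θhat n ω *
            (1 + ((2 - C) * σhat2 n ω / (2 * θhat n ω ^ 2)) / (n : ℝ))) ∂μ) -
          ∫ ω, R (θhat n ω) ∂μ))
      atTop (nhds (-(iteratedDeriv 2 R θ) * (2 - C) ^ 2 * σ2 ^ 2 / (8 * θ ^ 2))) ∧
    0 ≤ -(iteratedDeriv 2 R θ) * (2 - C) ^ 2 * σ2 ^ 2 / (8 * θ ^ 2) :=
  stmt_12_general μ θ hθ θhat hmeasθ σhat2 hmomθ σ2 hmomσ hA11 hA12 hA13 hA32 ε hε hA4 R hdiff hfoc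
    hconc C hratio M hbd hRint0 hRint1
end

section
/- Let θ ≠ 0 and let (θ̂_n) and (σ̂_n²) be sequences of real-valued random variables satisfying: lim_{n→∞} n·E[(θ̂_n − θ)²] = σ² with σ² > 0; E[θ̂_n − θ] = o(n⁻¹); E[|θ̂_n − θ|^k] = O(n^{−k/2}) for every integer k ≥ 3; E[σ̂_n² − σ²] = o(n⁻¹); E[(σ̂_n² − σ²)^j] = O(n^{−j}) for every integer j ≥ 2; E[(θ̂_n − θ)(σ̂_n² − σ²)] = o(n⁻¹); and |θ̂_n| ≥ ε almost surely for some ε > 0 and all n. Then E[ (θ̂_n − θ)·σ̂_n²/θ̂_n ] = −σ⁴/(n·θ²) + o(n⁻¹). -/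
/-!
Write `D = θ̂ − θ` and `S = σ̂² − σ²`. Expanding `1/θ̂` to second order around `1/θ`,
`D σ̂²/θ̂ = σ² D/θ + DS/θ − σ² D²/θ² − D²S/θ² + D³σ̂²/(θ²θ̂)`.
The first two terms have expectation `o(1/n)` by assumption and the third has expectation
`−σ⁴/(nθ²) + o(1/n)`. The last two are dominated by `D⁴ + S²` and, since `|θ̂| ≥ ε`, by a multiple
of `|D|³ + D⁶ + S²`; all of these have expectation `o(1/n)` by the moment bounds.
-/

open MeasureTheory Filter Asymptotics Real

lemma isLittleO_natCast_rpow_neg_inv {c : ℝ} (hc : 1 < c) :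
    (fun n : ℕ => (n : ℝ) ^ (-c)) =o[atTop] fun n : ℕ => (n : ℝ)⁻¹ := by
  rw [isLittleO_iff_tendsto' (by
    filter_upwards [eventually_gt_atTop 0] with n hn h
    exact absurd h (by positivity))]
  refine ((tendsto_rpow_neg_atTop (by linarith : 0 < c - 1)).comp
    tendsto_natCast_atTop_atTop).congr' ?_
  filter_upwards [eventually_gt_atTop 0] with n hn
  have hn' : (0 : ℝ) < n := by exact_mod_cast hn
  rw [Function.comp_apply, div_inv_eq_mul, neg_sub, sub_eq_neg_add, rpow_add hn', rpow_one]

lemma isLittleO_natCast_inv_of_isBigO_rpow_neg_half {f : ℕ → ℝ} {k : ℕ} (hk : 3 ≤ k)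
    (hf : f =O[atTop] fun n : ℕ => (n : ℝ) ^ (-(k : ℝ) / 2)) :
    f =o[atTop] fun n : ℕ => (n : ℝ)⁻¹ := by
  simp_rw [neg_div] at hf
  refine hf.trans_isLittleO (isLittleO_natCast_rpow_neg_inv ?_)
  have : (3 : ℝ) ≤ k := by exact_mod_cast hk
  linarith

lemma isLittleO_natCast_inv_of_isBigO_inv_sq {f : ℕ → ℝ}
    (hf : f =O[atTop] fun n : ℕ => ((n : ℝ) ^ 2)⁻¹) :
    f =o[atTop] fun n : ℕ => (n : ℝ)⁻¹ := by
  refine hf.trans_isLittleO ((isLittleO_natCast_rpow_neg_inv one_lt_two).congr_left fun n => ?_)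
  rw [rpow_neg n.cast_nonneg, rpow_two]

lemma isLittleO_sub_mul_inv_of_tendsto_mul {a : ℕ → ℝ} {c : ℝ}
    (h : Tendsto (fun n : ℕ => (n : ℝ) * a n) atTop (nhds c)) :
    (fun n : ℕ => a n - c * (n : ℝ)⁻¹) =o[atTop] fun n : ℕ => (n : ℝ)⁻¹ := by
  rw [isLittleO_iff_tendsto' (by
    filter_upwards [eventually_gt_atTop 0] with n hn h
    exact absurd h (by positivity))]
  have h0 : Tendsto (fun n : ℕ => (n : ℝ) * a n - c) atTop (nhds 0) := by
    simpa using h.sub_const c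
  refine h0.congr' ?_
  filter_upwards [eventually_gt_atTop 0] with n hn
  have hn' : (n : ℝ) ≠ 0 := by positivity
  field_simp

lemma abs_pow_mul_le (u v : ℝ) (k : ℕ) : |u ^ k * v| ≤ |u| ^ (2 * k) + v ^ 2 := by
  have h := two_mul_le_add_sq (|u| ^ k) |v|
  rw [abs_mul, abs_pow, pow_mul', sq_abs] at *
  nlinarith [mul_nonneg (pow_nonneg (abs_nonneg u) k) (abs_nonneg v)]

lemma sub_mul_div_eq_expansion {a b x y : ℝ} (ha : a ≠ 0) (hx : x ≠ 0) :
    (x - a) * y / x = b / a * (x - a) + a⁻¹ * ((x - a) * (y - b)) - b / a ^ 2 * (x - a) ^ 2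
      - (a ^ 2)⁻¹ * ((x - a) ^ 2 * (y - b)) + (x - a) ^ 3 * y / (a ^ 2 * x) := by
  field_simp
  ring

lemma abs_cube_mul_div_le {a b x y ε : ℝ} (ha : a ≠ 0) (hε : 0 < ε) (hx : ε ≤ |x|) :
    |(x - a) ^ 3 * y / (a ^ 2 * x)| ≤
      (a ^ 2 * ε)⁻¹ * (|b| * |x - a| ^ 3 + (|x - a| ^ 6 + (y - b) ^ 2)) := by
  have hnum : |(x - a) ^ 3 * y| ≤ |b| * |x - a| ^ 3 + (|x - a| ^ 6 + (y - b) ^ 2) :=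
    calc |(x - a) ^ 3 * y| = |b * (x - a) ^ 3 + (x - a) ^ 3 * (y - b)| :=
        congrArg abs (by ring)
      _ ≤ |b * (x - a) ^ 3| + |(x - a) ^ 3 * (y - b)| := abs_add_le _ _
      _ ≤ |b| * |x - a| ^ 3 + (|x - a| ^ 6 + (y - b) ^ 2) := by
        rw [abs_mul, abs_pow]
        exact add_le_add_right (abs_pow_mul_le _ _ 3) _
  have hden : a ^ 2 * ε ≤ |a ^ 2 * x| := by
    rw [abs_mul, abs_of_pos (by positivity)]
    exact mul_le_mul_of_nonneg_left hx (sq_nonneg a)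
  rw [abs_div, div_eq_inv_mul]
  exact mul_le_mul (inv_anti₀ (by positivity) hden) hnum (abs_nonneg _) (by positivity)

section

variable {Ω : Type*} [MeasurableSpace Ω] {μ : Measure Ω}

lemma isLittleO_integral_of_norm_le {ι : Type*} {l : Filter ι} {f g : ι → Ω → ℝ} {r : ι → ℝ}
    (hg : ∀ i, Integrable (g i) μ) (hfg : ∀ i, ∀ᵐ ω ∂μ, ‖f i ω‖ ≤ g i ω)
    (h : (fun i => ∫ ω, g i ω ∂μ) =o[l] r) : (fun i => ∫ ω, f i ω ∂μ) =o[l] r :=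
  (isBigO_of_le _ fun i =>
    (norm_integral_le_of_norm_le (hg i) (hfg i)).trans (le_abs_self _)).trans_isLittleO h

lemma integrable_pow_of_integrable_abs_pow {f : Ω → ℝ} (hf : AEStronglyMeasurable f μ) {k : ℕ}
    (h : Integrable (fun ω => |f ω| ^ k) μ) : Integrable (fun ω => f ω ^ k) μ :=
  (integrable_norm_iff (f := fun ω => f ω ^ k) (hf.pow k)).1
    (by simpa only [norm_pow, norm_eq_abs] using h)

lemma integrable_mul_of_integrable_sq {f g : Ω → ℝ} (hf : AEStronglyMeasurable f μ)
    (hg : AEStronglyMeasurable g μ) (hf2 : Integrable (fun ω => f ω ^ 2) μ)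
    (hg2 : Integrable (fun ω => g ω ^ 2) μ) : Integrable (fun ω => f ω * g ω) μ :=
  ((memLp_two_iff_integrable_sq hf).2 hf2).integrable_mul ((memLp_two_iff_integrable_sq hg).2 hg2)

variable {X Y : Ω → ℝ} {a b ε : ℝ}

lemma integrable_remainder_bound (hXmom : ∀ k : ℕ, Integrable (fun ω => |X ω - a| ^ k) μ)
    (hY2 : Integrable (fun ω => (Y ω - b) ^ 2) μ) :
    Integrable (fun ω =>
      (a ^ 2 * ε)⁻¹ * (|b| * |X ω - a| ^ 3 + (|X ω - a| ^ 6 + (Y ω - b) ^ 2))) μ :=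
  (((hXmom 3).const_mul _).add ((hXmom 6).add hY2)).const_mul _

lemma integral_sub_mul_div_eq_expansion (ha : a ≠ 0) (hε : 0 < ε) (hX : Measurable X)
    (hY : Measurable Y) (hXmom : ∀ k : ℕ, Integrable (fun ω => |X ω - a| ^ k) μ)
    (hY2 : Integrable (fun ω => (Y ω - b) ^ 2) μ) (hXε : ∀ᵐ ω ∂μ, ε ≤ |X ω|) :
    ∫ ω, (X ω - a) * Y ω / X ω ∂μ =
      b / a * ∫ ω, X ω - a ∂μ + a⁻¹ * ∫ ω, (X ω - a) * (Y ω - b) ∂μ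
        - b / a ^ 2 * ∫ ω, (X ω - a) ^ 2 ∂μ - (a ^ 2)⁻¹ * ∫ ω, (X ω - a) ^ 2 * (Y ω - b) ∂μ
        + ∫ ω, (X ω - a) ^ 3 * Y ω / (a ^ 2 * X ω) ∂μ := by
  have hD : AEStronglyMeasurable (fun ω => X ω - a) μ := (hX.sub_const a).aestronglyMeasurable
  have hS : AEStronglyMeasurable (fun ω => Y ω - b) μ := (hY.sub_const b).aestronglyMeasurable
  have iD : Integrable (fun ω => X ω - a) μ := by
    simpa using integrable_pow_of_integrable_abs_pow hD (hXmom 1)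
  have iD2 := integrable_pow_of_integrable_abs_pow hD (hXmom 2)
  have iDS := integrable_mul_of_integrable_sq hD hS iD2 hY2
  have iD2S := integrable_mul_of_integrable_sq (f := fun ω => (X ω - a) ^ 2) (hD.pow 2) hS
    (by simpa only [← pow_mul] using integrable_pow_of_integrable_abs_pow hD (hXmom 4)) hY2
  have iR : Integrable (fun ω => (X ω - a) ^ 3 * Y ω / (a ^ 2 * X ω)) μ := by
    refine (integrable_remainder_bound (ε := ε) hXmom hY2).mono'
      (Measurable.aestronglyMeasurable (by fun_prop)) ?_
    filter_upwards [hXε] with ω hω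
    exact abs_cube_mul_div_le ha hε hω
  calc ∫ ω, (X ω - a) * Y ω / X ω ∂μ
      = ∫ ω, b / a * (X ω - a) + a⁻¹ * ((X ω - a) * (Y ω - b)) - b / a ^ 2 * (X ω - a) ^ 2
          - (a ^ 2)⁻¹ * ((X ω - a) ^ 2 * (Y ω - b)) + (X ω - a) ^ 3 * Y ω / (a ^ 2 * X ω) ∂μ := by
        refine integral_congr_ae ?_
        filter_upwards [hXε] with ω hω
        exact sub_mul_div_eq_expansion ha (abs_pos.1 (hε.trans_le hω))
    _ = _ := by
        have i1 := (iD.const_mul (b / a)).fun_add (iDS.const_mul a⁻¹)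
        have i2 := i1.sub' (iD2.const_mul (b / a ^ 2))
        rw [integral_add (i2.sub' (iD2S.const_mul _)) iR, integral_sub i2 (iD2S.const_mul _),
          integral_sub i1 (iD2.const_mul _), integral_add (iD.const_mul _) (iDS.const_mul _),
          integral_const_mul, integral_const_mul, integral_const_mul, integral_const_mul]

end

section

variable {Ω ι : Type*} [MeasurableSpace Ω] {μ : Measure Ω} {l : Filter ι} {r : ι → ℝ}

lemma isLittleO_integral_sq_mul {X Y : ι → Ω → ℝ}
    (hX : ∀ i, Integrable (fun ω => |X i ω| ^ 4) μ) (hY : ∀ i, Integrable (fun ω => Y i ω ^ 2) μ)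
    (hX4 : (fun i => ∫ ω, |X i ω| ^ 4 ∂μ) =o[l] r) (hY2 : (fun i => ∫ ω, Y i ω ^ 2 ∂μ) =o[l] r) :
    (fun i => ∫ ω, X i ω ^ 2 * Y i ω ∂μ) =o[l] r :=
  isLittleO_integral_of_norm_le (fun i => (hX i).add (hY i))
    (fun _ => ae_of_all _ fun _ => abs_pow_mul_le _ _ 2)
    ((hX4.add hY2).congr_left fun i => (integral_add (hX i) (hY i)).symm)

lemma isLittleO_integral_remainder {X Y : ι → Ω → ℝ} {a b ε : ℝ} (ha : a ≠ 0) (hε : 0 < ε)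
    (hXmom : ∀ i k, Integrable (fun ω => |X i ω - a| ^ k) μ)
    (hY : ∀ i, Integrable (fun ω => (Y i ω - b) ^ 2) μ) (hXε : ∀ i, ∀ᵐ ω ∂μ, ε ≤ |X i ω|)
    (hX3 : (fun i => ∫ ω, |X i ω - a| ^ 3 ∂μ) =o[l] r)
    (hX6 : (fun i => ∫ ω, |X i ω - a| ^ 6 ∂μ) =o[l] r)
    (hY2 : (fun i => ∫ ω, (Y i ω - b) ^ 2 ∂μ) =o[l] r) :
    (fun i => ∫ ω, (X i ω - a) ^ 3 * Y i ω / (a ^ 2 * X i ω) ∂μ) =o[l] r := by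
  refine isLittleO_integral_of_norm_le (fun i => integrable_remainder_bound (hXmom i) (hY i))
    (fun i => (hXε i).mono fun ω hω => abs_cube_mul_div_le ha hε hω) ?_
  refine (((hX3.const_mul_left |b|).add (hX6.add hY2)).const_mul_left (a ^ 2 * ε)⁻¹).congr_left
    fun i => ?_
  rw [integral_const_mul, integral_add ((hXmom i 3).const_mul _) ((hXmom i 6).fun_add (hY i)),
    integral_const_mul, integral_add (hXmom i 6) (hY i)]

end

theorem stmt_13_general
    {Ω : Type*} [MeasurableSpace Ω] (μ : Measure Ω)
    (θ : ℝ) (hθ : θ ≠ 0)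
    (θhat : ℕ → Ω → ℝ) (hmeasθ : ∀ n, Measurable (θhat n))
    (σhat2 : ℕ → Ω → ℝ) (hmeasσ : ∀ n, Measurable (σhat2 n))
    (hmomθ : ∀ (n k : ℕ), Integrable (fun ω => |θhat n ω - θ| ^ k) μ)
    (σ2 : ℝ)
    (hmomσ : ∀ (n j : ℕ), Integrable (fun ω => (σhat2 n ω - σ2) ^ j) μ)
    (hA11 : Tendsto (fun n : ℕ => (n : ℝ) * ∫ ω, (θhat n ω - θ) ^ 2 ∂μ) atTop (nhds σ2))
    (hA12 : (fun n : ℕ => ∫ ω, (θhat n ω - θ) ∂μ) =o[atTop] fun n : ℕ => (n : ℝ)⁻¹)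
    (hA13 : ∀ k : ℕ, 3 ≤ k →
      (fun n : ℕ => ∫ ω, |θhat n ω - θ| ^ k ∂μ) =O[atTop]
        fun n : ℕ => (n : ℝ) ^ (-(k : ℝ) / 2))
    (hA32 : ∀ j : ℕ, 2 ≤ j →
      (fun n : ℕ => ∫ ω, (σhat2 n ω - σ2) ^ j ∂μ) =O[atTop]
        fun n : ℕ => ((n : ℝ) ^ j)⁻¹)
    (hA33 : (fun n : ℕ => ∫ ω, (θhat n ω - θ) * (σhat2 n ω - σ2) ∂μ) =o[atTop]
      fun n : ℕ => (n : ℝ)⁻¹)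
    (ε : ℝ) (hε : 0 < ε) (hA4 : ∀ n, ∀ᵐ ω ∂μ, ε ≤ |θhat n ω|) :
    (fun n : ℕ =>
        (∫ ω, (θhat n ω - θ) * σhat2 n ω / θhat n ω ∂μ) + σ2 ^ 2 / ((n : ℝ) * θ ^ 2))
      =o[atTop] fun n : ℕ => (n : ℝ)⁻¹ := by
  have hmom : ∀ k, 3 ≤ k →
      (fun n : ℕ => ∫ ω, |θhat n ω - θ| ^ k ∂μ) =o[atTop] fun n : ℕ => (n : ℝ)⁻¹ :=
    fun k hk => isLittleO_natCast_inv_of_isBigO_rpow_neg_half hk (hA13 k hk)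
  have hvar := isLittleO_sub_mul_inv_of_tendsto_mul hA11
  have hσmom := isLittleO_natCast_inv_of_isBigO_inv_sq (hA32 2 le_rfl)
  have hquad := isLittleO_integral_sq_mul (X := fun n ω => θhat n ω - θ)
    (fun n => hmomθ n 4) (fun n => hmomσ n 2) (hmom 4 (by norm_num)) hσmom
  have hrem := isLittleO_integral_remainder hθ hε hmomθ (fun n => hmomσ n 2) hA4
    (hmom 3 le_rfl) (hmom 6 (by norm_num)) hσmom
  refine (((((hA12.const_mul_left (σ2 / θ)).add (hA33.const_mul_left θ⁻¹)).sub
    (hvar.const_mul_left (σ2 / θ ^ 2))).sub (hquad.const_mul_left (θ ^ 2)⁻¹)).add hrem).congr_left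
    fun n => ?_
  rw [integral_sub_mul_div_eq_expansion hθ hε (hmeasθ n) (hmeasσ n) (hmomθ n) (hmomσ n 2) (hA4 n)]
  ring

/-- under the regularity conditions on `(θ̂_n, σ̂_n²)`,
`E[(θ̂_n − θ)·σ̂_n²/θ̂_n] = −σ⁴/(nθ²) + o(n⁻¹)`. -/
theorem stmt_13
    {Ω : Type*} [MeasurableSpace Ω] (μ : Measure Ω) [IsProbabilityMeasure μ]
    (θ : ℝ) (hθ : θ ≠ 0)
    (θhat : ℕ → Ω → ℝ) (hmeasθ : ∀ n, Measurable (θhat n))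
    (σhat2 : ℕ → Ω → ℝ) (hmeasσ : ∀ n, Measurable (σhat2 n))
    (hmomθ : ∀ (n k : ℕ), Integrable (fun ω => |θhat n ω - θ| ^ k) μ)
    (σ2 : ℝ) (hσ2 : 0 < σ2)
    (hmomσ : ∀ (n j : ℕ), Integrable (fun ω => (σhat2 n ω - σ2) ^ j) μ)
    (hmomcr : ∀ n : ℕ, Integrable (fun ω => (θhat n ω - θ) * (σhat2 n ω - σ2)) μ)
    (hintgoal : ∀ n : ℕ, Integrable (fun ω => (θhat n ω - θ) * σhat2 n ω / θhat n ω) μ)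
    (hA11 : Tendsto (fun n : ℕ => (n : ℝ) * ∫ ω, (θhat n ω - θ) ^ 2 ∂μ) atTop (nhds σ2))
    (hA12 : (fun n : ℕ => ∫ ω, (θhat n ω - θ) ∂μ) =o[atTop] fun n : ℕ => (n : ℝ)⁻¹)
    (hA13 : ∀ k : ℕ, 3 ≤ k →
      (fun n : ℕ => ∫ ω, |θhat n ω - θ| ^ k ∂μ) =O[atTop]
        fun n : ℕ => (n : ℝ) ^ (-(k : ℝ) / 2))
    (hA31 : (fun n : ℕ => ∫ ω, (σhat2 n ω - σ2) ∂μ) =o[atTop] fun n : ℕ => (n : ℝ)⁻¹)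
    (hA32 : ∀ j : ℕ, 2 ≤ j →
      (fun n : ℕ => ∫ ω, (σhat2 n ω - σ2) ^ j ∂μ) =O[atTop]
        fun n : ℕ => ((n : ℝ) ^ j)⁻¹)
    (hA33 : (fun n : ℕ => ∫ ω, (θhat n ω - θ) * (σhat2 n ω - σ2) ∂μ) =o[atTop]
      fun n : ℕ => (n : ℝ)⁻¹)
    (ε : ℝ) (hε : 0 < ε) (hA4 : ∀ n, ∀ᵐ ω ∂μ, ε ≤ |θhat n ω|) :
    (fun n : ℕ =>
        (∫ ω, (θhat n ω - θ) * σhat2 n ω / θhat n ω ∂μ) + σ2 ^ 2 / ((n : ℝ) * θ ^ 2))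
      =o[atTop] fun n : ℕ => (n : ℝ)⁻¹ :=
  stmt_13_general μ θ hθ θhat hmeasθ σhat2 hmeasσ hmomθ σ2 hmomσ hA11 hA12 hA13 hA32 hA33 ε hε hA4
end

section
/- Let θ ≠ 0, k ∈ ℝ, and let (θ̂_n) and (σ̂_n²) be sequences of real-valued random variables satisfying: lim_{n→∞} n·E[(θ̂_n − θ)²] = σ² with σ² > 0; E[θ̂_n − θ] = o(n⁻¹); E[|θ̂_n − θ|^j] = O(n^{−j/2}) for every integer j ≥ 3; E[σ̂_n² − σ²] = o(n⁻¹); E[(σ̂_n² − σ²)^j] = O(n^{−j}) for every integer j ≥ 2; E[(θ̂_n − θ)(σ̂_n² − σ²)] = o(n⁻¹); and |θ̂_n| ≥ ε almost surely for some ε > 0 and all n. Define the adjusted estimator θ̃_n = θ̂_n + k·σ̂_n²/(n·θ̂_n). Then E[(θ̃_n − θ)²] = E[(θ̂_n − θ)²] + (k² − 2k)·σ⁴/(n²·θ²) + o(n⁻²). -/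
open MeasureTheory Filter Asymptotics Real

/-!
Write `D = θ̂ₙ - θ` and `S = σ̂ₙ² - σ²`. Expanding the square,
`E[(θ̃ₙ - θ)²] = E[D²] + (2k/n) E[D σ̂ₙ²/θ̂ₙ] + (k²/n²) E[(σ̂ₙ²/θ̂ₙ)²]`,
so it suffices that `E[D σ̂ₙ²/θ̂ₙ] = -σ⁴/(θ² n) + o(1/n)` and `E[(σ̂ₙ²/θ̂ₙ)²] → σ⁴/θ²`.
For the first, `1/θ̂ₙ = 1/θ - D/θ² + D²/(θ² θ̂ₙ)`: the terms `E[D]` and `E[DS]` are `o(1/n)`,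
`-σ² E[D²]/θ²` gives the main term, and since `|θ̂ₙ| ≥ ε` the remainder is dominated, via AM-GM,
by `E|D|³, E D⁴, E D⁶, E S²`, all `o(1/n)`. For the second, `|θ̂ₙ| ≥ ε` bounds the error by
`E|D|, E D², E|S|, E S²`, which tend to zero (the first moments by Cauchy-Schwarz).
-/

lemma isLittleO_natCast_inv_of_tendsto_natCast_mul {a : ℕ → ℝ} {L : ℝ}
    (h : Tendsto (fun n : ℕ => (n : ℝ) * a n) atTop (nhds L)) :
    (fun n : ℕ => a n - L / n) =o[atTop] fun n : ℕ => (n : ℝ)⁻¹ := by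
  refine (isLittleO_iff_tendsto' ?_).2 ?_
  · filter_upwards [eventually_ne_atTop 0] with n hn h0
    simp_all
  · refine (tendsto_sub_nhds_zero_iff.2 h).congr' ?_
    filter_upwards [eventually_ne_atTop 0] with n hn
    field_simp

lemma isLittleO_natCast_rpow_neg_half {j : ℝ} (hj : 2 < j) :
    (fun n : ℕ => (n : ℝ) ^ (-j / 2)) =o[atTop] fun n : ℕ => (n : ℝ)⁻¹ := by
  refine (isLittleO_iff_tendsto' ?_).2 ?_
  · filter_upwards [eventually_ne_atTop 0] with n hn h0
    simp_all
  · have h : Tendsto (fun x : ℝ => x ^ (-(j / 2 - 1))) atTop (nhds 0) :=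
      tendsto_rpow_neg_atTop (by linarith)
    refine (h.comp tendsto_natCast_atTop_atTop).congr' ?_
    filter_upwards [eventually_gt_atTop 0] with n hn
    have hn : (0 : ℝ) < n := Nat.cast_pos.2 hn
    rw [Function.comp_apply, div_inv_eq_mul, show -(j / 2 - 1) = -j / 2 + 1 by ring,
      rpow_add hn, rpow_one]

lemma isLittleO_natCast_inv_sq :
    (fun n : ℕ => ((n : ℝ) ^ 2)⁻¹) =o[atTop] fun n : ℕ => (n : ℝ)⁻¹ := by
  have h := (isBigO_refl (fun n : ℕ => (n : ℝ)⁻¹) atTop).mul_isLittleO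
    (isLittleO_one_iff ℝ |>.2 tendsto_inv_atTop_nhds_zero_nat)
  simpa only [mul_one, ← mul_inv, ← sq, inv_pow] using h

lemma tendsto_zero_of_tendsto_natCast_mul {a : ℕ → ℝ} {L : ℝ}
    (h : Tendsto (fun n : ℕ => (n : ℝ) * a n) atTop (nhds L)) : Tendsto a atTop (nhds 0) := by
  have h' := h.mul (tendsto_inv_atTop_nhds_zero_nat (𝕜 := ℝ))
  rw [mul_zero] at h'
  refine h'.congr' ?_
  filter_upwards [eventually_ne_atTop 0] with n hn
  field_simp

lemma isLittleO_inv_sq_of_expansion {P Q : ℕ → ℝ} {c : ℝ} (k : ℝ)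
    (hP : (fun n : ℕ => P n + c / n) =o[atTop] fun n : ℕ => (n : ℝ)⁻¹)
    (hQ : (fun n : ℕ => Q n - c) =o[atTop] fun _ => (1 : ℝ)) :
    (fun n : ℕ => 2 * k / n * P n + k ^ 2 / n ^ 2 * Q n - (k ^ 2 - 2 * k) * c / n ^ 2)
      =o[atTop] fun n : ℕ => ((n : ℝ) ^ 2)⁻¹ := by
  have h₁ :=
    ((isBigO_refl (fun n : ℕ => (n : ℝ)⁻¹) atTop).const_mul_left (2 * k)).mul_isLittleO hP
  have h₂ :=
    ((isBigO_refl (fun n : ℕ => ((n : ℝ) ^ 2)⁻¹) atTop).const_mul_left (k ^ 2)).mul_isLittleO hQ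
  refine ((h₁.congr_right fun n => ?_).add (h₂.congr_right fun n => mul_one _)).congr_left
    fun n => ?_
  · rw [← mul_inv, ← sq]
  · ring

section

variable {ι Ω : Type*} [MeasurableSpace Ω] {μ : Measure Ω} {l : Filter ι} {r : ι → ℝ}
  {f g : ι → Ω → ℝ}

lemma MeasureTheory.Integrable.div_of_le_abs {f g : Ω → ℝ} {ε : ℝ} (hf : Integrable f μ)
    (hg : AEStronglyMeasurable g μ) (hε : 0 < ε) (hfg : ∀ᵐ ω ∂μ, ε ≤ |g ω|) :
    Integrable (fun ω => f ω / g ω) μ := by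
  refine (hf.bdd_mul hg.aemeasurable.inv.aestronglyMeasurable (c := ε⁻¹) ?_).congr
    (Eventually.of_forall fun ω => ?_)
  · filter_upwards [hfg] with ω hω
    rw [Pi.inv_apply, norm_inv, Real.norm_eq_abs]
    exact inv_anti₀ hε hω
  · simp only [Pi.inv_apply, div_eq_inv_mul]

lemma sq_integral_abs_le_integral_sq [IsProbabilityMeasure μ] {f : Ω → ℝ}
    (hf : AEStronglyMeasurable f μ) (hf2 : Integrable (fun ω => f ω ^ 2) μ) :
    (∫ ω, |f ω| ∂μ) ^ 2 ≤ ∫ ω, f ω ^ 2 ∂μ := by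
  have hvar := ProbabilityTheory.variance_nonneg |f| μ
  rw [ProbabilityTheory.variance_eq_sub ((memLp_two_iff_integrable_sq hf).2 hf2).abs] at hvar
  simpa only [Pi.pow_apply, Pi.abs_apply, sq_abs, sub_nonneg] using hvar

variable (μ l r) in
def IntegralIsLittleO (f : ι → Ω → ℝ) : Prop :=
  (∀ a, Integrable (f a) μ) ∧ (fun a => ∫ ω, f a ω ∂μ) =o[l] r

namespace IntegralIsLittleO

lemma add (hf : IntegralIsLittleO μ l r f) (hg : IntegralIsLittleO μ l r g) :
    IntegralIsLittleO μ l r fun a ω => f a ω + g a ω :=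
  ⟨fun a => (hf.1 a).add (hg.1 a),
    (hf.2.add hg.2).congr_left fun a => (integral_add (hf.1 a) (hg.1 a)).symm⟩

lemma const_mul (hf : IntegralIsLittleO μ l r f) (c : ℝ) :
    IntegralIsLittleO μ l r fun a ω => c * f a ω :=
  ⟨fun a => (hf.1 a).const_mul c,
    (hf.2.const_mul_left c).congr_left fun _ => (integral_const_mul c _).symm⟩

lemma div_const (hf : IntegralIsLittleO μ l r f) (c : ℝ) :
    IntegralIsLittleO μ l r fun a ω => f a ω / c := by
  simpa only [div_eq_inv_mul] using hf.const_mul c⁻¹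

lemma of_abs_le (hg : IntegralIsLittleO μ l r g) (hf : ∀ a, AEStronglyMeasurable (f a) μ)
    (hfg : ∀ a, ∀ᵐ ω ∂μ, |f a ω| ≤ g a ω) : IntegralIsLittleO μ l r f := by
  refine ⟨fun a => (hg.1 a).mono' (hf a) (hfg a), IsBigO.trans_isLittleO ?_ hg.2⟩
  refine IsBigO.of_bound 1 (Eventually.of_forall fun a => ?_)
  rw [one_mul]
  exact (norm_integral_le_of_norm_le (hg.1 a) (hfg a)).trans (le_norm_self _)

lemma trans_isBigO {r' : ι → ℝ} (hf : IntegralIsLittleO μ l r f) (hr : r =O[l] r') :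
    IntegralIsLittleO μ l r' f :=
  ⟨hf.1, hf.2.trans_isBigO hr⟩

lemma abs_of_sq [IsProbabilityMeasure μ] (hf : ∀ a, AEStronglyMeasurable (f a) μ)
    (hf2 : IntegralIsLittleO μ l (fun _ => 1) fun a ω => f a ω ^ 2) :
    IntegralIsLittleO μ l (fun _ => 1) fun a ω => |f a ω| := by
  refine ⟨fun a => ((memLp_two_iff_integrable_sq (hf a)).2 (hf2.1 a)).integrable
    one_le_two |>.abs, (isLittleO_one_iff ℝ).2 ?_⟩
  have hsqrt := ((continuous_sqrt.tendsto 0).comp ((isLittleO_one_iff ℝ).1 hf2.2))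
  rw [sqrt_zero] at hsqrt
  refine squeeze_zero (fun a => integral_nonneg fun ω => abs_nonneg _) (fun a => ?_) hsqrt
  exact (le_abs_self _).trans
    (abs_le_sqrt (sq_integral_abs_le_integral_sq (hf a) (hf2.1 a)))

end IntegralIsLittleO

end

-- With `x / 0 = 0` this also holds for `c = 0` or `x = 0`.
lemma sq_add_div_mul_sub (x y θ k c : ℝ) :
    (x + k * y / (c * x) - θ) ^ 2
      = (x - θ) ^ 2 + 2 * k / c * ((x - θ) * y / x) + k ^ 2 / c ^ 2 * (y / x) ^ 2 := by
  rcases eq_or_ne c 0 with rfl | hc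
  · simp
  rcases eq_or_ne x 0 with rfl | hx
  · simp
  field_simp
  ring

lemma abs_sub_mul_div_sub_le {x y θ σ2 ε : ℝ} (hθ : θ ≠ 0) (hε : 0 < ε) (hx : ε ≤ |x|) :
    |(x - θ) * y / x
        - (σ2 / θ * (x - θ) + (x - θ) * (y - σ2) / θ - σ2 / θ ^ 2 * (x - θ) ^ 2)|
      ≤ ((|x - θ| ^ 4 + (y - σ2) ^ 2) / 2
          + (|σ2| * |x - θ| ^ 3 + (|x - θ| ^ 6 + (y - σ2) ^ 2) / 2) / ε) / θ ^ 2 := by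
  have hx0 : x ≠ 0 := abs_pos.1 (hε.trans_le hx)
  have hexp : (x - θ) * y / x
        - (σ2 / θ * (x - θ) + (x - θ) * (y - σ2) / θ - σ2 / θ ^ 2 * (x - θ) ^ 2)
      = (-((x - θ) ^ 2 * (y - σ2)) + (σ2 * (x - θ) ^ 3 + (x - θ) ^ 3 * (y - σ2)) / x) / θ ^ 2 := by
    field_simp
    ring
  set d := x - θ
  set s := y - σ2
  have h₁ : |-(d ^ 2 * s)| ≤ (|d| ^ 4 + s ^ 2) / 2 := by
    rw [abs_neg, abs_mul, abs_pow]
    nlinarith [sq_nonneg (|d| ^ 2 - |s|), sq_abs s]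
  have h₂ : |σ2 * d ^ 3 + d ^ 3 * s| ≤ |σ2| * |d| ^ 3 + (|d| ^ 6 + s ^ 2) / 2 := by
    refine (abs_add_le _ _).trans (add_le_add ?_ ?_) <;> rw [abs_mul, abs_pow]
    nlinarith [sq_nonneg (|d| ^ 3 - |s|), sq_abs s]
  rw [hexp, abs_div, abs_of_nonneg (sq_nonneg θ)]
  gcongr
  refine (abs_add_le _ _).trans (add_le_add h₁ ?_)
  rw [abs_div]
  exact div_le_div₀ (by positivity) h₂ hε hx

lemma abs_div_sq_sub_le {x y θ σ2 ε : ℝ} (hθ : θ ≠ 0) (hε : 0 < ε) (hx : ε ≤ |x|) :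
    |(y / x) ^ 2 - σ2 ^ 2 / θ ^ 2|
      ≤ (2 * |σ2| * |y - σ2| + (y - σ2) ^ 2) / ε ^ 2
          + σ2 ^ 2 * (2 * |θ| * |x - θ| + (x - θ) ^ 2) / (ε ^ 2 * θ ^ 2) := by
  have hx0 : x ≠ 0 := abs_pos.1 (hε.trans_le hx)
  have hε2 : ε ^ 2 ≤ x ^ 2 := by rw [← sq_abs x]; gcongr
  have hexp : (y / x) ^ 2 - σ2 ^ 2 / θ ^ 2
      = (2 * σ2 * (y - σ2) + (y - σ2) ^ 2) / x ^ 2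
        - σ2 ^ 2 * (2 * θ * (x - θ) + (x - θ) ^ 2) / (x ^ 2 * θ ^ 2) := by
    field_simp
    ring
  rw [hexp]
  refine (abs_sub _ _).trans (add_le_add ?_ ?_)
  · rw [abs_div, abs_of_nonneg (sq_nonneg x)]
    gcongr
    refine (abs_add_le _ _).trans_eq ?_
    rw [abs_mul, abs_mul, abs_two, abs_of_nonneg (sq_nonneg (y - σ2))]
  · rw [abs_div, abs_mul, abs_of_nonneg (sq_nonneg σ2),
      abs_of_nonneg (by positivity : (0 : ℝ) ≤ x ^ 2 * θ ^ 2)]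
    gcongr
    refine (abs_add_le _ _).trans_eq ?_
    rw [abs_mul, abs_mul, abs_two, abs_of_nonneg (sq_nonneg (x - θ))]

section Estimator

variable {Ω : Type*} [MeasurableSpace Ω] {μ : Measure Ω} {θ σ2 ε : ℝ} {X Y : ℕ → Ω → ℝ}

lemma integral_sq_add_div_mul_sub {x y : Ω → ℝ} (θ k c : ℝ)
    (h₁ : Integrable (fun ω => (x ω - θ) ^ 2) μ)
    (h₂ : Integrable (fun ω => (x ω - θ) * y ω / x ω) μ)
    (h₃ : Integrable (fun ω => (y ω / x ω) ^ 2) μ) :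
    ∫ ω, (x ω + k * y ω / (c * x ω) - θ) ^ 2 ∂μ
      = ∫ ω, (x ω - θ) ^ 2 ∂μ + 2 * k / c * ∫ ω, (x ω - θ) * y ω / x ω ∂μ
          + k ^ 2 / c ^ 2 * ∫ ω, (y ω / x ω) ^ 2 ∂μ := by
  simp_rw [sq_add_div_mul_sub]
  rw [integral_add, integral_add h₁ (h₂.const_mul _), integral_const_mul, integral_const_mul]
  exacts [h₁.add (h₂.const_mul _), h₃.const_mul _]

lemma isLittleO_integral_sub_mul_div (hθ : θ ≠ 0) (hε : 0 < ε)
    (hX : ∀ n, Measurable (X n)) (hY : ∀ n, Measurable (Y n))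
    (hXε : ∀ n, ∀ᵐ ω ∂μ, ε ≤ |X n ω|)
    (hD : IntegralIsLittleO μ atTop (fun n : ℕ => (n : ℝ)⁻¹) fun n ω => X n ω - θ)
    (hDj : ∀ j : ℕ, 3 ≤ j →
      IntegralIsLittleO μ atTop (fun n : ℕ => (n : ℝ)⁻¹) fun n ω => |X n ω - θ| ^ j)
    (hD2 : ∀ n, Integrable (fun ω => (X n ω - θ) ^ 2) μ)
    (hD2lim : Tendsto (fun n : ℕ => (n : ℝ) * ∫ ω, (X n ω - θ) ^ 2 ∂μ) atTop (nhds σ2))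
    (hS2 : IntegralIsLittleO μ atTop (fun n : ℕ => (n : ℝ)⁻¹) fun n ω => (Y n ω - σ2) ^ 2)
    (hDS : IntegralIsLittleO μ atTop (fun n : ℕ => (n : ℝ)⁻¹)
      fun n ω => (X n ω - θ) * (Y n ω - σ2)) :
    (fun n : ℕ => ∫ ω, (X n ω - θ) * Y n ω / X n ω ∂μ + σ2 ^ 2 / θ ^ 2 / n)
      =o[atTop] fun n : ℕ => (n : ℝ)⁻¹ := by
  have hR : IntegralIsLittleO μ atTop (fun n : ℕ => (n : ℝ)⁻¹) fun n ω =>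
      (X n ω - θ) * Y n ω / X n ω - (σ2 / θ * (X n ω - θ) + (X n ω - θ) * (Y n ω - σ2) / θ
        - σ2 / θ ^ 2 * (X n ω - θ) ^ 2) :=
    ((((hDj 4 (by norm_num)).add hS2).div_const 2).add
      ((((hDj 3 le_rfl).const_mul |σ2|).add (((hDj 6 (by norm_num)).add hS2).div_const 2)).div_const
        ε) |>.div_const (θ ^ 2)).of_abs_le (fun n => by fun_prop)
      fun n => (hXε n).mono fun ω hω => abs_sub_mul_div_sub_le hθ hε hω
  have hP := (hR.add (hD.const_mul (σ2 / θ))).add (hDS.div_const θ)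
  refine (hP.2.sub ((isLittleO_natCast_inv_of_tendsto_natCast_mul hD2lim).const_mul_left
    (σ2 / θ ^ 2))).congr_left fun n => ?_
  dsimp only
  rw [mul_sub, ← integral_const_mul, ← sub_add, ← integral_sub (hP.1 n) ((hD2 n).const_mul _)]
  congr 1
  · exact integral_congr_ae (ae_of_all _ fun ω => by ring)
  · ring

lemma MeasureTheory.Integrable.sub_mul_div {x y : Ω → ℝ}
    (hDS : Integrable (fun ω => (x ω - θ) * (y ω - σ2)) μ) (hD : Integrable (fun ω => x ω - θ) μ)
    (hx : AEStronglyMeasurable x μ) (hε : 0 < ε) (hxε : ∀ᵐ ω ∂μ, ε ≤ |x ω|) :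
    Integrable (fun ω => (x ω - θ) * y ω / x ω) μ := by
  refine Integrable.div_of_le_abs ?_ hx hε hxε
  exact (hDS.add (hD.const_mul σ2)).congr (ae_of_all _ fun ω => by simp only [Pi.add_apply]; ring)

lemma MeasureTheory.Integrable.div_sq [IsFiniteMeasure μ] {x y : Ω → ℝ}
    (hS2 : Integrable (fun ω => (y ω - σ2) ^ 2) μ) (hx : AEStronglyMeasurable x μ)
    (hy : AEStronglyMeasurable y μ) (hε : 0 < ε) (hxε : ∀ᵐ ω ∂μ, ε ≤ |x ω|) :
    Integrable (fun ω => (y ω / x ω) ^ 2) μ := by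
  have hy2 : MemLp y 2 μ := by
    have hS := (memLp_two_iff_integrable_sq (hy.sub aestronglyMeasurable_const)).2 hS2
    simpa using hS.add (memLp_const σ2)
  simp_rw [div_pow]
  refine ((memLp_two_iff_integrable_sq hy).1 hy2).div_of_le_abs (hx.pow 2) (pow_pos hε 2) ?_
  filter_upwards [hxε] with ω hω
  rw [abs_pow]
  gcongr

lemma isLittleO_integral_div_sq_sub [IsProbabilityMeasure μ] (hθ : θ ≠ 0) (hε : 0 < ε)
    (hX : ∀ n, Measurable (X n)) (hY : ∀ n, Measurable (Y n))
    (hXε : ∀ n, ∀ᵐ ω ∂μ, ε ≤ |X n ω|)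
    (hint : ∀ n, Integrable (fun ω => (Y n ω / X n ω) ^ 2) μ)
    (hD2 : IntegralIsLittleO μ atTop (fun _ => 1) fun n ω => (X n ω - θ) ^ 2)
    (hS2 : IntegralIsLittleO μ atTop (fun _ => 1) fun n ω => (Y n ω - σ2) ^ 2) :
    (fun n : ℕ => ∫ ω, (Y n ω / X n ω) ^ 2 ∂μ - σ2 ^ 2 / θ ^ 2) =o[atTop] fun _ => (1 : ℝ) := by
  have hD := hD2.abs_of_sq fun n => ((hX n).sub_const θ).aestronglyMeasurable
  have hS := hS2.abs_of_sq fun n => ((hY n).sub_const σ2).aestronglyMeasurable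
  have h : IntegralIsLittleO μ atTop (fun _ => 1) fun n ω =>
      (Y n ω / X n ω) ^ 2 - σ2 ^ 2 / θ ^ 2 :=
    ((((hS.const_mul (2 * |σ2|)).add hS2).div_const (ε ^ 2)).add
      ((((hD.const_mul (2 * |θ|)).add hD2).const_mul (σ2 ^ 2)).div_const (ε ^ 2 * θ ^ 2))).of_abs_le
      (fun n => (by fun_prop : Measurable _).aestronglyMeasurable)
      fun n => (hXε n).mono fun ω hω => abs_div_sq_sub_le hθ hε hω
  refine h.2.congr_left fun n => ?_
  rw [integral_sub (hint n) (integrable_const _), integral_const, probReal_univ, one_smul]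

end Estimator

theorem stmt_14_general
    {Ω : Type*} [MeasurableSpace Ω] (μ : Measure Ω) [IsProbabilityMeasure μ]
    (θ : ℝ) (hθ : θ ≠ 0) (k : ℝ)
    (θhat : ℕ → Ω → ℝ) (hmeasθ : ∀ n, Measurable (θhat n))
    (σhat2 : ℕ → Ω → ℝ) (hmeasσ : ∀ n, Measurable (σhat2 n))
    (hmomθ : ∀ (n j : ℕ), Integrable (fun ω => |θhat n ω - θ| ^ j) μ)
    (σ2 : ℝ)
    (hmomσ : ∀ (n j : ℕ), Integrable (fun ω => (σhat2 n ω - σ2) ^ j) μ)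
    (hmomcr : ∀ n : ℕ, Integrable (fun ω => (θhat n ω - θ) * (σhat2 n ω - σ2)) μ)
    (hA11 : Tendsto (fun n : ℕ => (n : ℝ) * ∫ ω, (θhat n ω - θ) ^ 2 ∂μ) atTop (nhds σ2))
    (hA12 : (fun n : ℕ => ∫ ω, (θhat n ω - θ) ∂μ) =o[atTop] fun n : ℕ => (n : ℝ)⁻¹)
    (hA13 : ∀ j : ℕ, 3 ≤ j →
      (fun n : ℕ => ∫ ω, |θhat n ω - θ| ^ j ∂μ) =O[atTop]
        fun n : ℕ => (n : ℝ) ^ (-(j : ℝ) / 2))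
    (hA32 : ∀ j : ℕ, 2 ≤ j →
      (fun n : ℕ => ∫ ω, (σhat2 n ω - σ2) ^ j ∂μ) =O[atTop]
        fun n : ℕ => ((n : ℝ) ^ j)⁻¹)
    (hA33 : (fun n : ℕ => ∫ ω, (θhat n ω - θ) * (σhat2 n ω - σ2) ∂μ) =o[atTop]
      fun n : ℕ => (n : ℝ)⁻¹)
    (ε : ℝ) (hε : 0 < ε) (hA4 : ∀ n, ∀ᵐ ω ∂μ, ε ≤ |θhat n ω|) :
    (fun n : ℕ =>
        (∫ ω, (θhat n ω + k * σhat2 n ω / ((n : ℝ) * θhat n ω) - θ) ^ 2 ∂μ) -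
          (∫ ω, (θhat n ω - θ) ^ 2 ∂μ) -
          (k ^ 2 - 2 * k) * σ2 ^ 2 / ((n : ℝ) ^ 2 * θ ^ 2))
      =o[atTop] fun n : ℕ => ((n : ℝ) ^ 2)⁻¹ := by
  have hD n : Integrable (fun ω => θhat n ω - θ) μ :=
    (integrable_norm_iff ((hmeasθ n).sub_const θ).aestronglyMeasurable).1
      (by simpa only [pow_one, Real.norm_eq_abs] using hmomθ n 1)
  have hD2 n : Integrable (fun ω => (θhat n ω - θ) ^ 2) μ := by
    simpa only [sq_abs] using hmomθ n 2
  have hS2 : IntegralIsLittleO μ atTop (fun n : ℕ => (n : ℝ)⁻¹)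
      fun n ω => (σhat2 n ω - σ2) ^ 2 :=
    ⟨fun n => hmomσ n 2, (hA32 2 le_rfl).trans_isLittleO isLittleO_natCast_inv_sq⟩
  have hQint n := (hS2.1 n).div_sq (hmeasθ n).aestronglyMeasurable
    (hmeasσ n).aestronglyMeasurable hε (hA4 n)
  have hcross := isLittleO_integral_sub_mul_div hθ hε hmeasθ hmeasσ hA4 ⟨hD, hA12⟩
    (fun j hj => ⟨fun n => hmomθ n j, (hA13 j hj).trans_isLittleO
      (isLittleO_natCast_rpow_neg_half (by exact_mod_cast hj))⟩) hD2 hA11 hS2 ⟨hmomcr, hA33⟩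
  have hratio := isLittleO_integral_div_sq_sub hθ hε hmeasθ hmeasσ hA4 hQint
    ⟨hD2, (isLittleO_one_iff ℝ).2 (tendsto_zero_of_tendsto_natCast_mul hA11)⟩
    (hS2.trans_isBigO ((isLittleO_one_iff ℝ).2 tendsto_inv_atTop_nhds_zero_nat).isBigO)
  refine (isLittleO_inv_sq_of_expansion k hcross hratio).congr_left fun n => ?_
  rw [integral_sq_add_div_mul_sub θ k n (hD2 n) ((hmomcr n).sub_mul_div (hD n)
    (hmeasθ n).aestronglyMeasurable hε (hA4 n)) (hQint n)]
  ring

/-- second moment of the plug-in adjusted estimator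
`θ̃_n = θ̂_n + k·σ̂_n²/(n·θ̂_n)`:
`E[(θ̃_n − θ)²] = E[(θ̂_n − θ)²] + (k² − 2k)σ⁴/(n²θ²) + o(n⁻²)`. -/
theorem stmt_14
    {Ω : Type*} [MeasurableSpace Ω] (μ : Measure Ω) [IsProbabilityMeasure μ]
    (θ : ℝ) (hθ : θ ≠ 0) (k : ℝ)
    (θhat : ℕ → Ω → ℝ) (hmeasθ : ∀ n, Measurable (θhat n))
    (σhat2 : ℕ → Ω → ℝ) (hmeasσ : ∀ n, Measurable (σhat2 n))
    (hmomθ : ∀ (n j : ℕ), Integrable (fun ω => |θhat n ω - θ| ^ j) μ)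
    (σ2 : ℝ) (hσ2 : 0 < σ2)
    (hmomσ : ∀ (n j : ℕ), Integrable (fun ω => (σhat2 n ω - σ2) ^ j) μ)
    (hmomcr : ∀ n : ℕ, Integrable (fun ω => (θhat n ω - θ) * (σhat2 n ω - σ2)) μ)
    (hintadj : ∀ n : ℕ, Integrable
      (fun ω => (θhat n ω + k * σhat2 n ω / ((n : ℝ) * θhat n ω) - θ) ^ 2) μ)
    (hA11 : Tendsto (fun n : ℕ => (n : ℝ) * ∫ ω, (θhat n ω - θ) ^ 2 ∂μ) atTop (nhds σ2))
    (hA12 : (fun n : ℕ => ∫ ω, (θhat n ω - θ) ∂μ) =o[atTop] fun n : ℕ => (n : ℝ)⁻¹)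
    (hA13 : ∀ j : ℕ, 3 ≤ j →
      (fun n : ℕ => ∫ ω, |θhat n ω - θ| ^ j ∂μ) =O[atTop]
        fun n : ℕ => (n : ℝ) ^ (-(j : ℝ) / 2))
    (hA31 : (fun n : ℕ => ∫ ω, (σhat2 n ω - σ2) ∂μ) =o[atTop] fun n : ℕ => (n : ℝ)⁻¹)
    (hA32 : ∀ j : ℕ, 2 ≤ j →
      (fun n : ℕ => ∫ ω, (σhat2 n ω - σ2) ^ j ∂μ) =O[atTop]
        fun n : ℕ => ((n : ℝ) ^ j)⁻¹)
    (hA33 : (fun n : ℕ => ∫ ω, (θhat n ω - θ) * (σhat2 n ω - σ2) ∂μ) =o[atTop]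
      fun n : ℕ => (n : ℝ)⁻¹)
    (ε : ℝ) (hε : 0 < ε) (hA4 : ∀ n, ∀ᵐ ω ∂μ, ε ≤ |θhat n ω|) :
    (fun n : ℕ =>
        (∫ ω, (θhat n ω + k * σhat2 n ω / ((n : ℝ) * θhat n ω) - θ) ^ 2 ∂μ) -
          (∫ ω, (θhat n ω - θ) ^ 2 ∂μ) -
          (k ^ 2 - 2 * k) * σ2 ^ 2 / ((n : ℝ) ^ 2 * θ ^ 2))
      =o[atTop] fun n : ℕ => ((n : ℝ) ^ 2)⁻¹ :=
  stmt_14_general μ θ hθ k θhat hmeasθ σhat2 hmeasσ hmomθ σ2 hmomσ hmomcr hA11 hA12 hA13 hA32 hA33 ε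
    hε hA4
end

section
/- Let θ ≠ 0, k ∈ ℝ, and let (θ̂_n) and (σ̂_n²) be sequences of real-valued random variables satisfying: lim_{n→∞} n·E[(θ̂_n − θ)²] = σ² with σ² > 0; E[θ̂_n − θ] = o(n⁻¹); E[|θ̂_n − θ|^j] = O(n^{−j/2}) for every integer j ≥ 3; E[σ̂_n² − σ²] = o(n⁻¹); E[(σ̂_n² − σ²)^j] = O(n^{−j}) for every integer j ≥ 2; E[(θ̂_n − θ)(σ̂_n² − σ²)] = o(n⁻¹); and |θ̂_n| ≥ ε almost surely for some ε > 0 and all n. Define the adjusted estimator θ̃_n = θ̂_n + k·σ̂_n²/(n·θ̂_n). Then E[(θ̃_n − θ)³] = E[(θ̂_n − θ)³] + 3k·σ⁴/(n²·θ) + o(n⁻²). -/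
/-!
Write `X = θ̂ₙ - θ`, `V = σ̂ₙ² - σ²` and `D = k σ̂ₙ² / (n θ̂ₙ)`, so that
`(θ̃ₙ - θ)³ - X³ = 3X²D + 3XD² + D³`. Replacing `D` by `kσ²/(nθ)` in the first term gives
`3kσ² E[X²] / (nθ) = 3kσ⁴/(n²θ) + o(n⁻²)`, because `n E[X²] → σ²`. The rest is controlled by
`|θ̂ₙ| ≥ ε`, which gives `|D| ≤ (|k|/ε)(|σ²| + |V|)/n` and
`|D - kσ²/(nθ)| ≤ (|k|/ε)(|V| + |σ²/θ| |X|)/n`; weighted AM-GM then bounds the remainder by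
pure powers of `|X|` and `|V|` with powers of `n^(-1/2)` as coefficients, and the moment
hypotheses make its expectation `O(n^(-5/2))`.
-/

open MeasureTheory Filter Asymptotics Real Topology

/-- `w` stands for `n^(-1/2)`. Only pure powers of `|a|` and `|b|` occur, since only those
moments are controlled. -/
def cubeMajorant (w a b : ℝ) : ℝ :=
  w ^ 2 * (|a| ^ 3 + |a| ^ 4 + b ^ 2 + b ^ 4) + w ^ 3 * |a| ^ 2 + w ^ 5

theorem cubeMajorant_eq (w a b : ℝ) : cubeMajorant w a b =
    w ^ 2 * (|a| ^ 3 + |a| ^ 4 + |b| ^ 2 + |b| ^ 4) + w ^ 3 * |a| ^ 2 + w ^ 5 := by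
  rw [cubeMajorant, ← sq_abs b, ← Even.pow_abs (by decide : Even 4) b]

theorem sq_mul_le_cubeMajorant {w S : ℝ} (hw : 0 ≤ w) (hS : 0 ≤ S) (a b : ℝ) :
    a ^ 2 * (w ^ 2 * (|b| + S * |a|)) ≤ (1 + S) * cubeMajorant w a b := by
  rw [cubeMajorant_eq, ← sq_abs a]
  have hA := abs_nonneg a
  have hB := abs_nonneg b
  have hAB : |a| ^ 2 * |b| ≤ |a| ^ 4 + |b| ^ 2 := by
    nlinarith [sq_nonneg (|a| ^ 2 - |b|), pow_nonneg hA 4, sq_nonneg |b|]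
  have hrest : 0 ≤ w ^ 3 * |a| ^ 2 + w ^ 5 := by positivity
  have hsum : 0 ≤ |a| ^ 3 + |a| ^ 4 + |b| ^ 2 + |b| ^ 4 := by positivity
  calc |a| ^ 2 * (w ^ 2 * (|b| + S * |a|)) = w ^ 2 * (|a| ^ 2 * |b| + S * |a| ^ 3) := by ring
    _ ≤ w ^ 2 * ((1 + S) * (|a| ^ 3 + |a| ^ 4 + |b| ^ 2 + |b| ^ 4)) := by
      gcongr
      nlinarith [pow_nonneg hA 3, pow_nonneg hB 4, mul_nonneg hS hsum]
    _ ≤ (1 + S) *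
        (w ^ 2 * (|a| ^ 3 + |a| ^ 4 + |b| ^ 2 + |b| ^ 4) + w ^ 3 * |a| ^ 2 + w ^ 5) := by
      nlinarith [mul_nonneg (by linarith : 0 ≤ 1 + S) hrest]

theorem abs_mul_sq_le_cubeMajorant {w : ℝ} (hw0 : 0 ≤ w) (hw1 : w ≤ 1) (S a b : ℝ) :
    |a| * (w ^ 2 * (S + |b|)) ^ 2 ≤ (S ^ 2 + 1) * cubeMajorant w a b := by
  rw [cubeMajorant_eq]
  have hA := abs_nonneg a
  have hB := abs_nonneg b
  have hAw : 2 * w * |a| ≤ |a| ^ 2 + w ^ 2 := by nlinarith [sq_nonneg (|a| - w)]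
  have hABw : 2 * w ^ 4 * |a| * |b| ^ 2 ≤ w ^ 3 * |a| ^ 2 + w ^ 2 * |b| ^ 4 := by
    have : w ^ 5 * |b| ^ 4 ≤ w ^ 2 * |b| ^ 4 :=
      mul_le_mul_of_nonneg_right (pow_le_pow_of_le_one hw0 hw1 (by norm_num)) (by positivity)
    nlinarith [mul_nonneg (pow_nonneg hw0 3) (sq_nonneg (|a| - w * |b| ^ 2))]
  have hSB : (S + |b|) ^ 2 ≤ 2 * S ^ 2 + 2 * |b| ^ 2 := by nlinarith [sq_nonneg (S - |b|)]
  calc |a| * (w ^ 2 * (S + |b|)) ^ 2 = w ^ 4 * |a| * (S + |b|) ^ 2 := by ring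
    _ ≤ w ^ 4 * |a| * (2 * S ^ 2 + 2 * |b| ^ 2) := by gcongr
    _ = S ^ 2 * w ^ 3 * (2 * w * |a|) + 2 * w ^ 4 * |a| * |b| ^ 2 := by ring
    _ ≤ S ^ 2 * w ^ 3 * (|a| ^ 2 + w ^ 2) + (w ^ 3 * |a| ^ 2 + w ^ 2 * |b| ^ 4) := by gcongr
    _ ≤ _ := by
      nlinarith [pow_nonneg hw0 5,
        mul_nonneg (pow_nonneg hw0 2) (by positivity : 0 ≤ |a| ^ 3 + |a| ^ 4 + |b| ^ 2),
        mul_nonneg (sq_nonneg S) (mul_nonneg (pow_nonneg hw0 2)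
          (by positivity : 0 ≤ |a| ^ 3 + |a| ^ 4 + |b| ^ 2 + |b| ^ 4))]

theorem cube_le_cubeMajorant {w S : ℝ} (hw0 : 0 ≤ w) (hw1 : w ≤ 1) (hS : 0 ≤ S)
    (a b : ℝ) :
    (w ^ 2 * (S + |b|)) ^ 3 ≤ 4 * (S ^ 3 + 1) * cubeMajorant w a b := by
  rw [cubeMajorant_eq]
  have hA := abs_nonneg a
  have hB := abs_nonneg b
  have hSB : (S + |b|) ^ 3 ≤ 4 * S ^ 3 + 4 * |b| ^ 3 := by
    nlinarith [mul_nonneg (add_nonneg hS hB) (sq_nonneg (S - |b|))]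
  have hB3 : |b| ^ 3 ≤ |b| ^ 2 + |b| ^ 4 := by
    nlinarith [mul_nonneg (sq_nonneg |b|) (sq_nonneg (|b| - 1))]
  have hw5 : w ^ 6 ≤ w ^ 5 := pow_le_pow_of_le_one hw0 hw1 (by norm_num)
  have hw2 : w ^ 6 ≤ w ^ 2 := pow_le_pow_of_le_one hw0 hw1 (by norm_num)
  calc (w ^ 2 * (S + |b|)) ^ 3 = w ^ 6 * (S + |b|) ^ 3 := by ring
    _ ≤ w ^ 6 * (4 * S ^ 3 + 4 * (|b| ^ 2 + |b| ^ 4)) := by gcongr; linarith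
    _ = 4 * S ^ 3 * w ^ 6 + 4 * (w ^ 6 * (|b| ^ 2 + |b| ^ 4)) := by ring
    _ ≤ 4 * S ^ 3 * w ^ 5 + 4 * (w ^ 2 * (|b| ^ 2 + |b| ^ 4)) := by gcongr
    _ ≤ _ := by
      nlinarith [pow_nonneg hS 3, pow_nonneg hw0 2, pow_nonneg hw0 5,
        mul_nonneg (pow_nonneg hw0 2) (add_nonneg (pow_nonneg hA 3) (pow_nonneg hA 4)),
        mul_nonneg (pow_nonneg hw0 3) (sq_nonneg |a|),
        mul_nonneg (pow_nonneg hS 3) (by positivity :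
          0 ≤ w ^ 2 * (|a| ^ 3 + |a| ^ 4 + |b| ^ 2 + |b| ^ 4) + w ^ 3 * |a| ^ 2)]

theorem exists_abs_cube_remainder_le {c S : ℝ} (hc : 0 ≤ c) (hS : 0 ≤ S) :
    ∃ K, ∀ w a b D E : ℝ, 0 ≤ w → w ≤ 1 →
      |E| ≤ c * (w ^ 2 * (|b| + S * |a|)) → |D| ≤ c * (w ^ 2 * (S + |b|)) →
      |3 * a ^ 2 * E + 3 * a * D ^ 2 + D ^ 3| ≤ K * cubeMajorant w a b := by
  refine ⟨3 * c * (1 + S) + 3 * c ^ 2 * (S ^ 2 + 1) + 4 * c ^ 3 * (S ^ 3 + 1),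
    fun w a b D E hw0 hw1 hE hD => ?_⟩
  have h1 : |3 * a ^ 2 * E| ≤ 3 * c * ((1 + S) * cubeMajorant w a b) :=
    calc |3 * a ^ 2 * E| = 3 * (a ^ 2 * |E|) := by simp [abs_mul]; ring
      _ ≤ 3 * (a ^ 2 * (c * (w ^ 2 * (|b| + S * |a|)))) := by gcongr
      _ = 3 * c * (a ^ 2 * (w ^ 2 * (|b| + S * |a|))) := by ring
      _ ≤ _ := mul_le_mul_of_nonneg_left (sq_mul_le_cubeMajorant hw0 hS a b) (by positivity)
  have h2 : |3 * a * D ^ 2| ≤ 3 * c ^ 2 * ((S ^ 2 + 1) * cubeMajorant w a b) :=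
    calc |3 * a * D ^ 2| = 3 * (|a| * |D| ^ 2) := by simp [abs_mul]; ring
      _ ≤ 3 * (|a| * (c * (w ^ 2 * (S + |b|))) ^ 2) := by gcongr
      _ = 3 * c ^ 2 * (|a| * (w ^ 2 * (S + |b|)) ^ 2) := by ring
      _ ≤ _ :=
        mul_le_mul_of_nonneg_left (abs_mul_sq_le_cubeMajorant hw0 hw1 S a b) (by positivity)
  have h3 : |D ^ 3| ≤ c ^ 3 * (4 * (S ^ 3 + 1) * cubeMajorant w a b) :=
    calc |D ^ 3| = |D| ^ 3 := abs_pow D 3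
      _ ≤ (c * (w ^ 2 * (S + |b|))) ^ 3 := by gcongr
      _ = c ^ 3 * (w ^ 2 * (S + |b|)) ^ 3 := by ring
      _ ≤ _ := mul_le_mul_of_nonneg_left (cube_le_cubeMajorant hw0 hw1 hS a b) (by positivity)
  calc |3 * a ^ 2 * E + 3 * a * D ^ 2 + D ^ 3|
      ≤ |3 * a ^ 2 * E| + |3 * a * D ^ 2| + |D ^ 3| := abs_add_three _ _ _
    _ ≤ _ := (add_le_add_three h1 h2 h3).trans_eq (by ring)

theorem abs_mul_div_mul_le {ε x m : ℝ} (hε : 0 < ε) (hx : ε ≤ |x|) (hm : 0 < m)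
    (k y : ℝ) :
    |k * y / (m * x)| ≤ |k| / ε * (m⁻¹ * |y|) := by
  rw [abs_div, abs_mul, abs_mul, abs_of_pos hm]
  calc |k| * |y| / (m * |x|) ≤ |k| * |y| / (m * ε) := by gcongr
    _ = |k| / ε * (m⁻¹ * |y|) := by field_simp

theorem exists_abs_adjusted_cube_sub_le {θ ε : ℝ} (hθ : θ ≠ 0) (hε : 0 < ε) (k s : ℝ) :
    ∃ K, ∀ m x v : ℝ, 1 ≤ m → ε ≤ |x| →
      |(x + k * v / (m * x) - θ) ^ 3 - (x - θ) ^ 3 - 3 * k * s / (m * θ) * (x - θ) ^ 2|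
        ≤ K * cubeMajorant (√m)⁻¹ (x - θ) (v - s) := by
  set S := |s| + |s / θ|
  obtain ⟨K, hK⟩ := exists_abs_cube_remainder_le (c := |k| / ε) (S := S) (by positivity)
    (by positivity)
  refine ⟨K, fun m x v hm hx => ?_⟩
  have hm0 : 0 < m := by linarith
  have hx0 : x ≠ 0 := abs_pos.mp (hε.trans_le hx)
  have hw2 : ((√m)⁻¹) ^ 2 = m⁻¹ := by rw [inv_pow, sq_sqrt hm0.le]
  have hw1 : (√m)⁻¹ ≤ 1 := inv_le_one_of_one_le₀ (one_le_sqrt.mpr hm)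
  set D := k * v / (m * x)
  have hD : |D| ≤ |k| / ε * ((√m)⁻¹ ^ 2 * (S + |v - s|)) := by
    have hv : |v| ≤ S + |v - s| := by
      calc |v| ≤ |s| + |v - s| := by simpa using abs_add_le s (v - s)
        _ ≤ S + |v - s| := by gcongr; exact le_add_of_nonneg_right (abs_nonneg _)
    rw [hw2]
    exact (abs_mul_div_mul_le hε hx hm0 k v).trans (by gcongr)
  have hE : |D - k * s / (m * θ)| ≤ |k| / ε * ((√m)⁻¹ ^ 2 * (|v - s| + S * |x - θ|)) := by
    have hdiff : D - k * s / (m * θ) = k * ((v - s) - s / θ * (x - θ)) / (m * x) := by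
      simp only [D]; field_simp; ring
    have hnum : |(v - s) - s / θ * (x - θ)| ≤ |v - s| + S * |x - θ| := by
      calc |(v - s) - s / θ * (x - θ)| ≤ |v - s| + |s / θ| * |x - θ| := by
            simpa [abs_mul] using abs_sub (v - s) (s / θ * (x - θ))
        _ ≤ |v - s| + S * |x - θ| := by gcongr; exact le_add_of_nonneg_left (abs_nonneg _)
    rw [hdiff, hw2]
    exact (abs_mul_div_mul_le hε hx hm0 k _).trans (by gcongr)
  calc |(x + D - θ) ^ 3 - (x - θ) ^ 3 - 3 * k * s / (m * θ) * (x - θ) ^ 2|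
      = |3 * (x - θ) ^ 2 * (D - k * s / (m * θ)) + 3 * (x - θ) * D ^ 2 + D ^ 3| := by
        congr 1; ring
    _ ≤ K * cubeMajorant (√m)⁻¹ (x - θ) (v - s) := hK _ _ _ _ _ (by positivity) hw1 hE hD

section Integral

variable {Ω : Type*} [MeasurableSpace Ω] {μ : Measure Ω}

theorem abs_integral_sub_integral_le {F G H : Ω → ℝ} (hF : AEStronglyMeasurable F μ)
    (hG : Integrable G μ) (hH : Integrable H μ) (hle : ∀ᵐ ω ∂μ, |F ω - G ω| ≤ H ω) :
    |∫ ω, F ω ∂μ - ∫ ω, G ω ∂μ| ≤ ∫ ω, H ω ∂μ := by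
  have hFG : Integrable (fun ω => F ω - G ω) μ := hH.mono' (hF.sub hG.1) hle
  have hFint : Integrable F μ :=
    (hFG.add hG).congr (ae_of_all _ fun ω => sub_add_cancel (F ω) (G ω))
  rw [← integral_sub hFint hG]
  exact norm_integral_le_of_norm_le (f := fun ω => F ω - G ω) hH hle

variable [IsProbabilityMeasure μ]

theorem integral_cubeMajorant (w : ℝ) {a b : Ω → ℝ}
    (ha : ∀ j, Integrable (fun ω => |a ω| ^ j) μ)
    (hb2 : Integrable (fun ω => b ω ^ 2) μ) (hb4 : Integrable (fun ω => b ω ^ 4) μ) :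
    Integrable (fun ω => cubeMajorant w (a ω) (b ω)) μ ∧
      ∫ ω, cubeMajorant w (a ω) (b ω) ∂μ =
        w ^ 2 * (∫ ω, |a ω| ^ 3 ∂μ + ∫ ω, |a ω| ^ 4 ∂μ
            + ∫ ω, b ω ^ 2 ∂μ + ∫ ω, b ω ^ 4 ∂μ)
          + w ^ 3 * ∫ ω, |a ω| ^ 2 ∂μ + w ^ 5 := by
  have h12 : Integrable (fun ω => |a ω| ^ 3 + |a ω| ^ 4) μ := (ha 3).add (ha 4)
  have h123 : Integrable (fun ω => |a ω| ^ 3 + |a ω| ^ 4 + b ω ^ 2) μ := h12.add hb2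
  have h1234 : Integrable (fun ω => |a ω| ^ 3 + |a ω| ^ 4 + b ω ^ 2 + b ω ^ 4) μ :=
    h123.add hb4
  have hlin : Integrable (fun ω => w ^ 2 * (|a ω| ^ 3 + |a ω| ^ 4 + b ω ^ 2 + b ω ^ 4)
      + w ^ 3 * |a ω| ^ 2) μ := (h1234.const_mul _).add ((ha 2).const_mul _)
  refine ⟨hlin.add (integrable_const _), ?_⟩
  simp only [cubeMajorant]
  rw [integral_add hlin (integrable_const _), integral_add (h1234.const_mul _)
    ((ha 2).const_mul _), integral_const_mul, integral_const_mul, integral_add h123 hb4,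
    integral_add h12 hb2, integral_add (ha 3) (ha 4)]
  simp

theorem exists_abs_integral_adjusted_cube_sub_le {θ ε : ℝ} (hθ : θ ≠ 0) (hε : 0 < ε)
    (k s : ℝ) :
    ∃ K, ∀ (m : ℝ) (X V : Ω → ℝ), 1 ≤ m → Measurable X → Measurable V →
      (∀ j, Integrable (fun ω => |X ω - θ| ^ j) μ) →
      Integrable (fun ω => (V ω - s) ^ 2) μ → Integrable (fun ω => (V ω - s) ^ 4) μ →
      (∀ᵐ ω ∂μ, ε ≤ |X ω|) →
      |∫ ω, (X ω + k * V ω / (m * X ω) - θ) ^ 3 ∂μ - ∫ ω, (X ω - θ) ^ 3 ∂μ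
          - 3 * k * s / (m * θ) * ∫ ω, (X ω - θ) ^ 2 ∂μ|
        ≤ K * ∫ ω, cubeMajorant (√m)⁻¹ (X ω - θ) (V ω - s) ∂μ := by
  obtain ⟨K, hK⟩ := exists_abs_adjusted_cube_sub_le hθ hε k s
  refine ⟨K, fun m X V hm hXm hVm hX hV2 hV4 hXε => ?_⟩
  have hsq : Integrable (fun ω => (X ω - θ) ^ 2) μ :=
    (hX 2).congr (ae_of_all _ fun ω => sq_abs _)
  have hcube : Integrable (fun ω => (X ω - θ) ^ 3) μ :=
    (hX 3).mono' (by fun_prop) (ae_of_all _ fun ω => by simp)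
  have hmeas : Measurable fun ω => (X ω + k * V ω / (m * X ω) - θ) ^ 3 := by fun_prop
  have hG : Integrable (fun ω => (X ω - θ) ^ 3 + 3 * k * s / (m * θ) * (X ω - θ) ^ 2) μ :=
    hcube.add (hsq.const_mul _)
  have hbound := abs_integral_sub_integral_le hmeas.aestronglyMeasurable hG
    ((integral_cubeMajorant (√m)⁻¹ hX hV2 hV4).1.const_mul K) <| by
      filter_upwards [hXε] with ω hω
      simpa only [sub_sub] using hK m (X ω) (V ω) hm hω
  rwa [integral_add hcube (hsq.const_mul _), integral_const_mul, integral_const_mul,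
    ← sub_sub] at hbound

end Integral

section Asymptotics

theorem rpow_neg_div_two_eq_inv_sqrt_pow {x : ℝ} (hx : 0 ≤ x) (j : ℕ) :
    x ^ (-(j : ℝ) / 2) = (√x)⁻¹ ^ j := by
  rw [sqrt_eq_rpow, ← rpow_neg hx, ← rpow_natCast, ← rpow_mul hx]
  ring_nf

theorem inv_pow_eq_inv_sqrt_pow {x : ℝ} (hx : 0 ≤ x) (j : ℕ) :
    (x ^ j)⁻¹ = (√x)⁻¹ ^ (2 * j) := by
  rw [pow_mul, inv_pow, sq_sqrt hx, inv_pow]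

theorem tendsto_inv_sqrt_natCast_atTop :
    Tendsto (fun n : ℕ => (√(n : ℝ))⁻¹) atTop (𝓝 0) :=
  tendsto_inv_atTop_zero.comp (tendsto_sqrt_atTop.comp tendsto_natCast_atTop_atTop)

theorem inv_sqrt_natCast_pow_isBigO {i j : ℕ} (hij : j < i) :
    (fun n : ℕ => (√(n : ℝ))⁻¹ ^ i) =O[atTop] fun n : ℕ => (√(n : ℝ))⁻¹ ^ j :=
  ((isLittleO_pow_pow hij).comp_tendsto tendsto_inv_sqrt_natCast_atTop).isBigO

theorem inv_sqrt_natCast_pow_five_isLittleO :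
    (fun n : ℕ => (√(n : ℝ))⁻¹ ^ 5) =o[atTop] fun n : ℕ => ((n : ℝ) ^ 2)⁻¹ :=
  ((isLittleO_pow_pow (by norm_num : 4 < 5)).comp_tendsto
    tendsto_inv_sqrt_natCast_atTop).congr_right fun n =>
      (inv_pow_eq_inv_sqrt_pow (Nat.cast_nonneg n) 2).symm

theorem isBigO_inv_of_tendsto_mul {f : ℕ → ℝ} {c : ℝ}
    (h : Tendsto (fun n : ℕ => (n : ℝ) * f n) atTop (𝓝 c)) :
    f =O[atTop] fun n : ℕ => (n : ℝ)⁻¹ := by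
  refine ((isBigO_refl (fun n : ℕ => (n : ℝ)⁻¹) atTop).mul (h.isBigO_one ℝ)).congr' ?_
    (by simp)
  filter_upwards [eventually_ne_atTop 0] with n hn
  field_simp

theorem isLittleO_div_mul_sub_of_tendsto_mul {f : ℕ → ℝ} {c : ℝ}
    (h : Tendsto (fun n : ℕ => (n : ℝ) * f n) atTop (𝓝 c)) (d : ℝ) :
    (fun n : ℕ => d / n * f n - d * c / (n : ℝ) ^ 2) =o[atTop]
      fun n : ℕ => ((n : ℝ) ^ 2)⁻¹ := by
  have h0 : (fun n : ℕ => (n : ℝ) * f n - c) =o[atTop] fun _ => (1 : ℝ) :=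
    (isLittleO_one_iff ℝ).mpr (tendsto_sub_nhds_zero_iff.mpr h)
  refine ((isBigO_const_mul_self d (fun n : ℕ => ((n : ℝ) ^ 2)⁻¹) atTop).mul_isLittleO
    h0).congr' ?_ (by simp)
  filter_upwards [eventually_ne_atTop 0] with n hn
  field_simp

variable {Ω : Type*} [MeasurableSpace Ω] {μ : Measure Ω} [IsProbabilityMeasure μ]

theorem integral_cubeMajorant_isBigO {ι : Type*} {l : Filter ι} {w : ι → ℝ}
    {a b : ι → Ω → ℝ} (ha : ∀ i j, Integrable (fun ω => |a i ω| ^ j) μ)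
    (hb2 : ∀ i, Integrable (fun ω => b i ω ^ 2) μ)
    (hb4 : ∀ i, Integrable (fun ω => b i ω ^ 4) μ)
    (ha2O : (fun i => ∫ ω, |a i ω| ^ 2 ∂μ) =O[l] fun i => w i ^ 2)
    (ha3O : (fun i => ∫ ω, |a i ω| ^ 3 ∂μ) =O[l] fun i => w i ^ 3)
    (ha4O : (fun i => ∫ ω, |a i ω| ^ 4 ∂μ) =O[l] fun i => w i ^ 3)
    (hb2O : (fun i => ∫ ω, b i ω ^ 2 ∂μ) =O[l] fun i => w i ^ 3)
    (hb4O : (fun i => ∫ ω, b i ω ^ 4 ∂μ) =O[l] fun i => w i ^ 3) :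
    (fun i => ∫ ω, cubeMajorant (w i) (a i ω) (b i ω) ∂μ) =O[l] fun i => w i ^ 5 := by
  have hsum := ((ha3O.add ha4O).add hb2O).add hb4O
  have h1 : (fun i => w i ^ 2 * (∫ ω, |a i ω| ^ 3 ∂μ + ∫ ω, |a i ω| ^ 4 ∂μ
      + ∫ ω, b i ω ^ 2 ∂μ + ∫ ω, b i ω ^ 4 ∂μ)) =O[l] fun i => w i ^ 5 :=
    ((isBigO_refl (fun i => w i ^ 2) l).mul hsum).congr_right fun i => by ring
  have h2 : (fun i => w i ^ 3 * ∫ ω, |a i ω| ^ 2 ∂μ) =O[l] fun i => w i ^ 5 :=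
    ((isBigO_refl (fun i => w i ^ 3) l).mul ha2O).congr_right fun i => by ring
  refine ((h1.add h2).add (isBigO_refl _ l)).congr_left fun i => ?_
  exact ((integral_cubeMajorant (w i) (ha i) (hb2 i) (hb4 i)).2).symm

theorem integral_cubeMajorant_inv_sqrt_isBigO {a b : ℕ → Ω → ℝ} {c : ℝ}
    (ha : ∀ n j, Integrable (fun ω => |a n ω| ^ j) μ)
    (hb : ∀ n j, Integrable (fun ω => b n ω ^ j) μ)
    (ha2 : Tendsto (fun n : ℕ => (n : ℝ) * ∫ ω, a n ω ^ 2 ∂μ) atTop (𝓝 c))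
    (haj : ∀ j : ℕ, 3 ≤ j → (fun n : ℕ => ∫ ω, |a n ω| ^ j ∂μ) =O[atTop]
      fun n : ℕ => (n : ℝ) ^ (-(j : ℝ) / 2))
    (hbj : ∀ j : ℕ, 2 ≤ j → (fun n : ℕ => ∫ ω, b n ω ^ j ∂μ) =O[atTop]
      fun n : ℕ => ((n : ℝ) ^ j)⁻¹) :
    (fun n : ℕ => ∫ ω, cubeMajorant (√(n : ℝ))⁻¹ (a n ω) (b n ω) ∂μ) =O[atTop]
      fun n : ℕ => (√(n : ℝ))⁻¹ ^ 5 := by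
  have ha2O : (fun n : ℕ => ∫ ω, |a n ω| ^ 2 ∂μ) =O[atTop]
      fun n : ℕ => (√(n : ℝ))⁻¹ ^ 2 := by
    refine (isBigO_inv_of_tendsto_mul ha2).congr (fun n => ?_) (fun n => ?_)
    · simp only [sq_abs]
    · rw [inv_pow, sq_sqrt (Nat.cast_nonneg n)]
  have haO (j : ℕ) (hj : 3 ≤ j) :=
    (haj j hj).congr_right fun n => rpow_neg_div_two_eq_inv_sqrt_pow (Nat.cast_nonneg n) j
  have hbO (j : ℕ) (hj : 2 ≤ j) :=
    (hbj j hj).congr_right fun n => inv_pow_eq_inv_sqrt_pow (Nat.cast_nonneg n) j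
  exact integral_cubeMajorant_isBigO ha (fun n => hb n 2) (fun n => hb n 4) ha2O (haO 3 le_rfl)
    ((haO 4 (by norm_num)).trans (inv_sqrt_natCast_pow_isBigO (by norm_num)))
    ((hbO 2 le_rfl).trans (inv_sqrt_natCast_pow_isBigO (by norm_num)))
    ((hbO 4 (by norm_num)).trans (inv_sqrt_natCast_pow_isBigO (by norm_num)))

end Asymptotics

theorem stmt_15_general
    {Ω : Type*} [MeasurableSpace Ω] (μ : Measure Ω) [IsProbabilityMeasure μ]
    (θ : ℝ) (hθ : θ ≠ 0) (k : ℝ)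
    (θhat : ℕ → Ω → ℝ) (hmeasθ : ∀ n, Measurable (θhat n))
    (σhat2 : ℕ → Ω → ℝ) (hmeasσ : ∀ n, Measurable (σhat2 n))
    (hmomθ : ∀ (n j : ℕ), Integrable (fun ω => |θhat n ω - θ| ^ j) μ)
    (σ2 : ℝ)
    (hmomσ : ∀ (n j : ℕ), Integrable (fun ω => (σhat2 n ω - σ2) ^ j) μ)
    (hA11 : Tendsto (fun n : ℕ => (n : ℝ) * ∫ ω, (θhat n ω - θ) ^ 2 ∂μ) atTop (nhds σ2))
    (hA13 : ∀ j : ℕ, 3 ≤ j →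
      (fun n : ℕ => ∫ ω, |θhat n ω - θ| ^ j ∂μ) =O[atTop]
        fun n : ℕ => (n : ℝ) ^ (-(j : ℝ) / 2))
    (hA32 : ∀ j : ℕ, 2 ≤ j →
      (fun n : ℕ => ∫ ω, (σhat2 n ω - σ2) ^ j ∂μ) =O[atTop]
        fun n : ℕ => ((n : ℝ) ^ j)⁻¹)
    (ε : ℝ) (hε : 0 < ε) (hA4 : ∀ n, ∀ᵐ ω ∂μ, ε ≤ |θhat n ω|) :
    (fun n : ℕ =>
        (∫ ω, (θhat n ω + k * σhat2 n ω / ((n : ℝ) * θhat n ω) - θ) ^ 3 ∂μ) -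
          (∫ ω, (θhat n ω - θ) ^ 3 ∂μ) -
          3 * k * σ2 ^ 2 / ((n : ℝ) ^ 2 * θ))
      =o[atTop] fun n : ℕ => ((n : ℝ) ^ 2)⁻¹ := by
  obtain ⟨K, hK⟩ := exists_abs_integral_adjusted_cube_sub_le (μ := μ) hθ hε k σ2
  have hΦ := integral_cubeMajorant_inv_sqrt_isBigO (a := fun n ω => θhat n ω - θ) hmomθ hmomσ
    hA11 hA13 hA32
  have hrem : (fun n : ℕ =>
      ∫ ω, (θhat n ω + k * σhat2 n ω / ((n : ℝ) * θhat n ω) - θ) ^ 3 ∂μ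
        - ∫ ω, (θhat n ω - θ) ^ 3 ∂μ
        - 3 * k * σ2 / ((n : ℝ) * θ) * ∫ ω, (θhat n ω - θ) ^ 2 ∂μ)
        =o[atTop] fun n : ℕ => ((n : ℝ) ^ 2)⁻¹ := by
    refine (IsBigO.trans ?_ hΦ).trans_isLittleO inv_sqrt_natCast_pow_five_isLittleO
    refine IsBigO.of_bound |K| ?_
    filter_upwards [eventually_ge_atTop 1] with n hn
    refine (hK n (θhat n) (σhat2 n) (by exact_mod_cast hn) (hmeasθ n) (hmeasσ n) (hmomθ n)
      (hmomσ n 2) (hmomσ n 4) (hA4 n)).trans ?_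
    rw [Real.norm_eq_abs, ← abs_mul]
    exact le_abs_self _
  refine (hrem.add (isLittleO_div_mul_sub_of_tendsto_mul hA11 (3 * k * σ2 / θ))).congr_left
    fun n => ?_
  ring

/-- third moment of the plug-in adjusted estimator
`θ̃_n = θ̂_n + k·σ̂_n²/(n·θ̂_n)`:
`E[(θ̃_n − θ)³] = E[(θ̂_n − θ)³] + 3kσ⁴/(n²θ) + o(n⁻²)`. -/
theorem stmt_15
    {Ω : Type*} [MeasurableSpace Ω] (μ : Measure Ω) [IsProbabilityMeasure μ]
    (θ : ℝ) (hθ : θ ≠ 0) (k : ℝ)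
    (θhat : ℕ → Ω → ℝ) (hmeasθ : ∀ n, Measurable (θhat n))
    (σhat2 : ℕ → Ω → ℝ) (hmeasσ : ∀ n, Measurable (σhat2 n))
    (hmomθ : ∀ (n j : ℕ), Integrable (fun ω => |θhat n ω - θ| ^ j) μ)
    (σ2 : ℝ) (hσ2 : 0 < σ2)
    (hmomσ : ∀ (n j : ℕ), Integrable (fun ω => (σhat2 n ω - σ2) ^ j) μ)
    (hmomcr : ∀ n : ℕ, Integrable (fun ω => (θhat n ω - θ) * (σhat2 n ω - σ2)) μ)
    (hintadj : ∀ n : ℕ, Integrable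
      (fun ω => (θhat n ω + k * σhat2 n ω / ((n : ℝ) * θhat n ω) - θ) ^ 3) μ)
    (hA11 : Tendsto (fun n : ℕ => (n : ℝ) * ∫ ω, (θhat n ω - θ) ^ 2 ∂μ) atTop (nhds σ2))
    (hA12 : (fun n : ℕ => ∫ ω, (θhat n ω - θ) ∂μ) =o[atTop] fun n : ℕ => (n : ℝ)⁻¹)
    (hA13 : ∀ j : ℕ, 3 ≤ j →
      (fun n : ℕ => ∫ ω, |θhat n ω - θ| ^ j ∂μ) =O[atTop]
        fun n : ℕ => (n : ℝ) ^ (-(j : ℝ) / 2))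
    (hA31 : (fun n : ℕ => ∫ ω, (σhat2 n ω - σ2) ∂μ) =o[atTop] fun n : ℕ => (n : ℝ)⁻¹)
    (hA32 : ∀ j : ℕ, 2 ≤ j →
      (fun n : ℕ => ∫ ω, (σhat2 n ω - σ2) ^ j ∂μ) =O[atTop]
        fun n : ℕ => ((n : ℝ) ^ j)⁻¹)
    (hA33 : (fun n : ℕ => ∫ ω, (θhat n ω - θ) * (σhat2 n ω - σ2) ∂μ) =o[atTop]
      fun n : ℕ => (n : ℝ)⁻¹)
    (ε : ℝ) (hε : 0 < ε) (hA4 : ∀ n, ∀ᵐ ω ∂μ, ε ≤ |θhat n ω|) :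
    (fun n : ℕ =>
        (∫ ω, (θhat n ω + k * σhat2 n ω / ((n : ℝ) * θhat n ω) - θ) ^ 3 ∂μ) -
          (∫ ω, (θhat n ω - θ) ^ 3 ∂μ) -
          3 * k * σ2 ^ 2 / ((n : ℝ) ^ 2 * θ))
      =o[atTop] fun n : ℕ => ((n : ℝ) ^ 2)⁻¹ :=
  stmt_15_general μ θ hθ k θhat hmeasθ σhat2 hmeasσ hmomθ σ2 hmomσ hA11 hA13 hA32 ε hε hA4
end
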